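/- arXiv:2007.15716 — 4 statements merged into one kernel-verified Lean document; each statement's English description precedes it below -/
import Mathlib

section
/- Let F be a field and A a locally matrix algebra over F. Then the inner derivations are dense in the Lie algebra of all derivations of A in the Tykhonoff (pointwise-convergence) topology; concretely: for every derivation d of A and every finite list of elements a_1, …, a_n ∈ A there exists an element b ∈ A such that d(a_i) = b·a_i − a_i·b for all i = 1, …, n. -/
/-!
Inside a matrix subalgebra `B ≅ Mₙ(F)` of `A` with matrix units `Eᵢⱼ` and unit `e = ∑ Eᵢᵢ`, the
element `c = ∑ᵢ d(Eᵢ₀) E₀ᵢ` satisfies `d(x) e = c x - x c` for every `x ∈ B`. The missing part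
`d(x) - d(x) e = x d(e)` is the inner derivation of `-e d(e)`, because `e d(e) e = 0`.
So `b = c - e d(e)` works for every finite subset of `A`, which lies in some such `B`.
-/

/-- A (not necessarily unital) associative algebra `A` over a field `F` is a *locally matrix
algebra* if every finite subset of `A` is contained in a subalgebra of `A` that is isomorphic
to a matrix algebra `Mₙ(F)` for some `n ≥ 1`. -/
def IsLocallyMatrix (F A : Type*) [Field F] [NonUnitalRing A] [Module F A]
    [SMulCommClass F A A] [IsScalarTower F A A] : Prop :=
  ∀ s : Finset A, ∃ (B : NonUnitalSubalgebra F A) (n : ℕ), 0 < n ∧ (s : Set A) ⊆ (B : Set A) ∧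
    ∃ f : B →ₙₐ[F] Matrix (Fin n) (Fin n) F, Function.Bijective f

open Function

noncomputable def NonUnitalAlgHom.invOfBijective {R A B : Type*} [CommSemiring R]
    [NonUnitalNonAssocSemiring A] [Module R A] [NonUnitalNonAssocSemiring B] [Module R B]
    (f : A →ₙₐ[R] B) (hf : Bijective f) : B →ₙₐ[R] A where
  toFun := surjInv hf.2
  map_smul' c x := hf.1 <| by simp only [MonoidHom.id_apply, map_smul, surjInv_eq hf.2]
  map_zero' := hf.1 <| by simp only [map_zero, surjInv_eq hf.2]
  map_add' x y := hf.1 <| by simp only [map_add, surjInv_eq hf.2]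
  map_mul' x y := hf.1 <| by simp only [map_mul, surjInv_eq hf.2]

theorem NonUnitalAlgHom.invOfBijective_apply_self {R A B : Type*} [CommSemiring R]
    [NonUnitalNonAssocSemiring A] [Module R A] [NonUnitalNonAssocSemiring B] [Module R B]
    (f : A →ₙₐ[R] B) (hf : Bijective f) (x : A) : f.invOfBijective hf (f x) = x :=
  leftInverse_surjInv hf x

theorem map_zero_of_leibniz {A : Type*} [NonUnitalRing A] {d : A → A}
    (hd : ∀ x y, d (x * y) = d x * y + x * d y) : d 0 = 0 := by
  simpa using hd 0 0

theorem mul_map_mul_eq_zero_of_idempotent {A : Type*} [NonUnitalRing A] {d : A → A}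
    (hd : ∀ x y, d (x * y) = d x * y + x * d y) {e : A} (he : IsIdempotentElem e) :
    e * d e * e = 0 := by
  have h : e * d e * e = e * d e * e + e * d e * e :=
    calc e * d e * e = e * d (e * e) * e := by rw [he.eq]
      _ = e * d e * (e * e) + (e * e) * d e * e := by rw [hd]; noncomm_ring
      _ = _ := by rw [he.eq]
  simpa using h

theorem map_matrixUnit_mul_sum_diag {A : Type*} [NonUnitalRing A] {d : A → A}
    (hd : ∀ x y, d (x * y) = d x * y + x * d y)
    {ι : Type*} [Fintype ι] [DecidableEq ι] {E : ι → ι → A}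
    (hE : ∀ i j k l, E i j * E k l = if j = k then E i l else 0) (i₀ j k : ι) :
    d (E j k) * ∑ i, E i i =
      (∑ i, d (E i i₀) * E i₀ i) * E j k - E j k * ∑ i, d (E i i₀) * E i₀ i := by
  have hleft : (∑ i, d (E i i₀) * E i₀ i) * E j k = d (E j i₀) * E i₀ k := by
    simp only [Finset.sum_mul, mul_assoc, hE, mul_ite, mul_zero, Finset.sum_ite_eq',
      Finset.mem_univ, if_true]
  have hterm (i : ι) : E j k * (d (E i i₀) * E i₀ i) =
      d (E j k * E i i₀) * E i₀ i - d (E j k) * E i i := by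
    rw [hd, add_mul, mul_assoc (d (E j k)), hE i i₀ i₀ i, if_pos rfl, mul_assoc]
    abel
  have hright : E j k * ∑ i, d (E i i₀) * E i₀ i =
      d (E j i₀) * E i₀ k - d (E j k) * ∑ i, E i i := by
    simp only [Finset.mul_sum, hterm, Finset.sum_sub_distrib, hE j k, apply_ite d,
      map_zero_of_leibniz hd, ite_mul, zero_mul, Finset.sum_ite_eq, Finset.mem_univ, if_true]
  rw [hleft, hright, sub_sub_cancel]

theorem exists_map_eq_commutator_on_matrix {F A ι : Type*} [Field F] [NonUnitalRing A]
    [Module F A] [SMulCommClass F A A] [IsScalarTower F A A] [Fintype ι] [DecidableEq ι]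
    [Nonempty ι] (φ : Matrix ι ι F →ₙₐ[F] A) (d : A →ₗ[F] A)
    (hd : ∀ x y, d (x * y) = d x * y + x * d y) :
    ∃ b : A, ∀ M, d (φ M) = b * φ M - φ M * b := by
  obtain ⟨i₀⟩ := ‹Nonempty ι›
  set E : ι → ι → A := fun i j => φ (Matrix.single i j 1)
  set e := φ 1
  have hE (i j k l : ι) : E i j * E k l = if j = k then E i l else 0 := by
    simp only [E, ← map_mul]
    split_ifs with h
    · rw [h, Matrix.single_mul_single_same, mul_one]
    · rw [Matrix.single_mul_single_of_ne (h := h), map_zero]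
  have hsum : ∑ i, E i i = e := by simp only [E, e, ← map_sum, Matrix.sum_single_one]
  set c := ∑ i, d (E i i₀) * E i₀ i
  have hc (M : Matrix ι ι F) : d (φ M) * e = c * φ M - φ M * c := by
    induction M using Matrix.induction_on' with
    | h_zero => simp only [map_zero, zero_mul, mul_zero, sub_self]
    | h_add M N hM hN => simp only [map_add, add_mul, mul_add, hM, hN]; abel
    | h_std_basis i j x =>
      rw [show Matrix.single i j x = x • Matrix.single i j 1 by
          rw [Matrix.smul_single, smul_eq_mul, mul_one],
        map_smul, map_smul, smul_mul_assoc,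
        mul_smul_comm, smul_mul_assoc, ← smul_sub, ← hsum,
        map_matrixUnit_mul_sum_diag hd hE i₀ i j]
  have hee : IsIdempotentElem e := by rw [IsIdempotentElem, ← map_mul, mul_one]
  refine ⟨c - e * d e, fun M => ?_⟩
  have hMe : φ M * e = φ M := by rw [← map_mul, mul_one]
  have heM : e * φ M = φ M := by rw [← map_mul, one_mul]
  calc d (φ M) = d (φ M * e) := by rw [hMe]
    _ = d (φ M) * e + φ M * d e := hd _ _
    _ = c * φ M - φ M * c + φ M * e * d e - e * d e * e * φ M := by
      rw [hc, mul_map_mul_eq_zero_of_idempotent hd hee, hMe, zero_mul, sub_zero]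
    _ = (c - e * d e) * φ M - φ M * (c - e * d e) := by
      rw [mul_assoc (e * d e) e, heM]; noncomm_ring

/-- **Inner derivations are dense in the derivations** (Theorem 1(1)): if `A` is a locally
matrix algebra over a field `F`, then for every derivation `d` of `A` and every finite list of
elements of `A` there is an element `b ∈ A` such that `d` agrees with `ad(b) : x ↦ b*x - x*b`
on these elements. -/
theorem innerDerivations_dense (F A : Type*) [Field F] [NonUnitalRing A] [Module F A]
    [SMulCommClass F A A] [IsScalarTower F A A] (hA : IsLocallyMatrix F A)
    (d : A →ₗ[F] A) (hd : ∀ x y : A, d (x * y) = d x * y + x * d y)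
    (s : Finset A) :
    ∃ b : A, ∀ a ∈ s, d a = b * a - a * b := by
  obtain ⟨B, n, hn, hsB, f, hf⟩ := hA s
  have : Nonempty (Fin n) := ⟨⟨0, hn⟩⟩
  obtain ⟨b, hb⟩ := exists_map_eq_commutator_on_matrix
    ((NonUnitalSubalgebraClass.subtype B).comp (f.invOfBijective hf)) d hd
  refine ⟨b, fun a ha => ?_⟩
  simpa [NonUnitalAlgHom.invOfBijective_apply_self] using hb (f ⟨a, hsB ha⟩)
end

section
/- Let F be a field and A a unital locally matrix algebra over F. Then the inner automorphisms are dense in the semigroup of unital injective endomorphisms of A in the Tykhonoff (pointwise-convergence) topology; concretely: for every injective unital F-algebra endomorphism φ of A and every finite list of elements a_1, …, a_n ∈ A there exists an invertible element u ∈ A such that φ(a_i) = u⁻¹·a_i·u for all i = 1, …, n. -/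
open Module LinearMap

structure IsMatrixUnits {R ι : Type*} [Semiring R] [Fintype ι] [DecidableEq ι]
    (e : ι → ι → R) : Prop where
  mul_eq : ∀ i j k l, e i j * e k l = if j = k then e i l else 0
  sum_diag : ∑ i, e i i = 1

theorem Matrix.isMatrixUnits_single {R ι : Type*} [Semiring R] [Fintype ι] [DecidableEq ι] :
    IsMatrixUnits fun i j : ι => Matrix.single i j (1 : R) where
  mul_eq i j k l := by
    split_ifs with h
    · subst h; simp
    · simp [h]
  sum_diag := Matrix.sum_single_one

namespace IsMatrixUnits

variable {ι : Type*} [Fintype ι] [DecidableEq ι]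

section Semiring

variable {R S : Type*} [Semiring R] [Semiring S] {e f : ι → ι → R}

theorem map {G : Type*} [FunLike G R S] [RingHomClass G R S] (he : IsMatrixUnits e) (g : G) :
    IsMatrixUnits fun i j => g (e i j) where
  mul_eq i j k l := by rw [← map_mul, he.mul_eq]; split_ifs <;> simp
  sum_diag := by rw [← map_sum, he.sum_diag, map_one]

theorem of_map {G : Type*} [FunLike G R S] [RingHomClass G R S] {g : G}
    (hg : Function.Injective g) (he : IsMatrixUnits fun i j => g (e i j)) : IsMatrixUnits e where
  mul_eq i j k l := hg (by rw [map_mul, he.mul_eq]; split_ifs <;> simp)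
  sum_diag := hg (by rw [map_sum, he.sum_diag, map_one])

theorem isIdempotentElem (he : IsMatrixUnits e) (i : ι) : IsIdempotentElem (e i i) := by
  rw [IsIdempotentElem, he.mul_eq, if_pos rfl]

theorem mul_mul (he : IsMatrixUnits e) (i j k : ι) : e i j * e j j * e j k = e i k := by
  simp [he.mul_eq]

theorem sum_mul (he : IsMatrixUnits e) (a : ι → R) (z k l : ι) :
    (∑ i, a i * e z i) * e k l = a k * e z l := by
  simp [Finset.sum_mul, mul_assoc, he.mul_eq]

theorem mul_sum (he : IsMatrixUnits e) (b : ι → R) (z k l : ι) :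
    e k l * ∑ j, e j z * b j = e k z * b l := by
  simp [Finset.mul_sum, ← mul_assoc, he.mul_eq]

theorem sum_mul_mul_sum (he : IsMatrixUnits e) (a b : ι → R) (z k l : ι) :
    (∑ i, a i * e z i) * e k l * ∑ j, e j z * b j = a k * e z z * b l := by
  rw [he.sum_mul, mul_assoc, he.mul_sum, mul_assoc]

theorem sum_mul_sum (he : IsMatrixUnits e) (a b : ι → R) (z : ι) :
    (∑ i, a i * e z i) * ∑ j, e j z * b j = ∑ k, a k * e z z * b k := by
  calc _ = ∑ k, (∑ i, a i * e z i) * e k k * ∑ j, e j z * b j := by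
        rw [← Finset.sum_mul, ← Finset.mul_sum, he.sum_diag, mul_one]
    _ = _ := Finset.sum_congr rfl fun k _ => he.sum_mul_mul_sum a b z k k

theorem exists_units_conj_eq (he : IsMatrixUnits e) (hf : IsMatrixUnits f) {z : ι} {x y : R}
    (hxy : x * y = e z z) (hyx : y * x = f z z) :
    ∃ u : Rˣ, ∀ k l, ↑u⁻¹ * e k l * ↑u = f k l := by
  have hxfy : x * f z z * y = e z z := by
    rw [← hyx, ← mul_assoc, hxy, mul_assoc, hxy, (he.isIdempotentElem z).eq]
  have hyex : y * e z z * x = f z z := by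
    rw [← hxy, ← mul_assoc, hyx, mul_assoc, hyx, (hf.isIdempotentElem z).eq]
  set u := ∑ i, e i z * x * f z i with hu
  set v := ∑ i, f i z * y * e z i with hv
  have hu' : u = ∑ j, e j z * (x * f z j) := by simp only [hu, mul_assoc]
  have hv' : v = ∑ j, f j z * (y * e z j) := by simp only [hv, mul_assoc]
  have huv : u * v = 1 := by
    rw [hv', hf.sum_mul_sum, ← he.sum_diag]
    refine Finset.sum_congr rfl fun i _ => ?_
    rw [← he.mul_mul i z i, ← hxfy]
    noncomm_ring
  have hvu : v * u = 1 := by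
    rw [hu', he.sum_mul_sum, ← hf.sum_diag]
    refine Finset.sum_congr rfl fun i _ => ?_
    rw [← hf.mul_mul i z i, ← hyex]
    noncomm_ring
  refine ⟨⟨u, v, huv, hvu⟩, fun k l => ?_⟩
  show v * e k l * u = f k l
  rw [hu', he.sum_mul_mul_sum, ← hf.mul_mul k z l, ← hyex]
  noncomm_ring

end Semiring

section Module

variable {R M : Type*} [Ring R] [AddCommGroup M] [Module R M] {e : ι → ι → Module.End R M}

theorem apply_mem_range (he : IsMatrixUnits e) (z i : ι) (v : M) : e z i v ∈ range (e z z) :=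
  ⟨e z i v, by rw [← Module.End.mul_apply, he.mul_eq, if_pos rfl]⟩

noncomputable def equivPiRange (he : IsMatrixUnits e) (z : ι) :
    M ≃ₗ[R] (ι → range (e z z)) :=
  LinearEquiv.ofLinearMap
    (LinearMap.pi fun i => (e z i).codRestrict _ (he.apply_mem_range z i))
    (∑ i, e i z ∘ₗ (range (e z z)).subtype ∘ₗ LinearMap.proj i)
    (by
      refine LinearMap.ext fun w => funext fun j => Subtype.ext ?_
      simp [← Module.End.mul_apply, he.mul_eq, DFunLike.ite_apply]
      exact (LinearMap.IsIdempotentElem.mem_range_iff (he.isIdempotentElem z)).mp (w j).2)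
    (by
      ext v
      simpa [← Module.End.mul_apply, he.mul_eq] using congr($he.sum_diag v))

end Module

section FiniteDimensional

variable {F V : Type*} [DivisionRing F] [AddCommGroup V] [Module F V] [FiniteDimensional F V]
  {e f : ι → ι → Module.End F V}

theorem finrank_eq_card_mul (he : IsMatrixUnits e) (z : ι) :
    finrank F V = Fintype.card ι * finrank F (range (e z z)) := by
  rw [(he.equivPiRange z).finrank_eq, Module.finrank_pi_fintype, Finset.sum_const,
    Finset.card_univ, smul_eq_mul]

theorem finrank_range_eq (he : IsMatrixUnits e) (hf : IsMatrixUnits f) (z : ι) :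
    finrank F (range (e z z)) = finrank F (range (f z z)) :=
  Nat.eq_of_mul_eq_mul_left (Fintype.card_pos_iff.mpr ⟨z⟩)
    ((he.finrank_eq_card_mul z).symm.trans (hf.finrank_eq_card_mul z))

end FiniteDimensional

end IsMatrixUnits

theorem Module.End.exists_mul_eq_of_finrank_range_eq {F V : Type*} [DivisionRing F]
    [AddCommGroup V] [Module F V] [FiniteDimensional F V] {p q : Module.End F V}
    (hp : IsIdempotentElem p) (hq : IsIdempotentElem q)
    (h : finrank F (range p) = finrank F (range q)) :
    ∃ x y : Module.End F V, x * y = p ∧ y * x = q := by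
  let θ : range q ≃ₗ[F] range p := LinearEquiv.ofFinrankEq _ _ h.symm
  have hP := LinearMap.IsIdempotentElem.isProj_range p hp
  have hQ := LinearMap.IsIdempotentElem.isProj_range q hq
  refine ⟨(range p).subtype ∘ₗ θ.toLinearMap ∘ₗ hQ.codRestrict,
    (range q).subtype ∘ₗ θ.symm.toLinearMap ∘ₗ hP.codRestrict, ?_, ?_⟩ <;>
  ext v <;> simp [hP.codRestrict_apply_cod, hQ.codRestrict_apply_cod, IsProj.codRestrict_apply]

theorem IsMatrixUnits.exists_mul_eq_of_ringEquiv {R ι F V : Type*} [Ring R] [Fintype ι]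
    [DecidableEq ι] [DivisionRing F] [AddCommGroup V] [Module F V] [FiniteDimensional F V]
    (T : R ≃+* Module.End F V) {e f : ι → ι → R} (he : IsMatrixUnits e) (hf : IsMatrixUnits f)
    (z : ι) : ∃ x y : R, x * y = e z z ∧ y * x = f z z := by
  obtain ⟨x, y, hxy, hyx⟩ := Module.End.exists_mul_eq_of_finrank_range_eq
    ((he.map T).isIdempotentElem z) ((hf.map T).isIdempotentElem z)
    ((he.map T).finrank_range_eq (hf.map T) z)
  exact ⟨T.symm x, T.symm y, T.injective (by simpa using hxy), T.injective (by simpa using hyx)⟩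

namespace IsLocallyMatrix

variable {F A : Type*} [Field F] [Ring A] [Algebra F A]

theorem exists_subalgebra (hA : IsLocallyMatrix F A) (s : Finset A) :
    ∃ (B : Subalgebra F A) (n : ℕ), 0 < n ∧ (s : Set A) ⊆ B ∧
      Nonempty (B ≃ₐ[F] Matrix (Fin n) (Fin n) F) := by
  classical
  obtain ⟨B, n, hn, hsB, f, hf⟩ := hA (insert 1 s)
  have h1 : (1 : A) ∈ B := hsB (by simp)
  refine ⟨B.toSubalgebra h1, n, hn, fun a ha => hsB (by simp [ha]), ⟨?_⟩⟩
  let g : B.toSubalgebra h1 ≃+* Matrix (Fin n) (Fin n) F := RingEquiv.ofBijective f hf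
  refine AlgEquiv.ofRingEquiv (f := g) fun r => ?_
  rw [Algebra.algebraMap_eq_smul_one, Algebra.algebraMap_eq_smul_one, ← map_one g]
  exact map_smul f r _

theorem exists_units_conj_eq (hA : IsLocallyMatrix F A) {ι : Type*} [Fintype ι] [DecidableEq ι]
    {e f : ι → ι → A} (he : IsMatrixUnits e) (hf : IsMatrixUnits f) (z : ι) :
    ∃ u : Aˣ, ∀ k l, ↑u⁻¹ * e k l * ↑u = f k l := by
  classical
  obtain ⟨C, m, -, hC, ⟨T⟩⟩ := hA.exists_subalgebra
    (Finset.univ.image (fun p : ι × ι => e p.1 p.2) ∪ Finset.univ.image fun p : ι × ι => f p.1 p.2)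
  have heC : ∀ i j, e i j ∈ C := fun i j => hC (by simp)
  have hfC : ∀ i j, f i j ∈ C := fun i j => hC (by simp)
  obtain ⟨x, y, hxy, hyx⟩ := IsMatrixUnits.exists_mul_eq_of_ringEquiv
    (T.trans Matrix.toLinAlgEquiv').toRingEquiv
    (he.of_map (e := fun i j => (⟨e i j, heC i j⟩ : C)) (g := C.val) Subtype.val_injective)
    (hf.of_map (e := fun i j => (⟨f i j, hfC i j⟩ : C)) (g := C.val) Subtype.val_injective) z
  exact he.exists_units_conj_eq hf (congrArg Subtype.val hxy) (congrArg Subtype.val hyx)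

end IsLocallyMatrix

theorem innerAutomorphisms_dense_general (F A : Type*) [Field F] [Ring A] [Algebra F A]
    (hA : IsLocallyMatrix F A)
    (φ : A →ₐ[F] A) (s : Finset A) :
    ∃ u : Aˣ, ∀ a ∈ s, φ a = ↑u⁻¹ * a * ↑u := by
  obtain ⟨B, n, hn, hsB, ⟨T⟩⟩ := hA.exists_subalgebra s
  let ψ : Matrix (Fin n) (Fin n) F →ₐ[F] A := B.val.comp T.symm.toAlgHom
  have he := Matrix.isMatrixUnits_single.map ψ
  obtain ⟨u, hu⟩ := hA.exists_units_conj_eq he (he.map φ) ⟨0, hn⟩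
  have hconj : ∀ M, φ (ψ M) = ↑u⁻¹ * ψ M * ↑u := fun M => by
    induction M using Matrix.induction_on' with
    | h_zero => simp
    | h_add M N hM hN => simp [hM, hN, mul_add, add_mul]
    | h_std_basis i j c =>
      rw [← mul_one c, ← smul_eq_mul, ← Matrix.smul_single, map_smul, map_smul, ← hu,
        mul_smul_comm, smul_mul_assoc]
  refine ⟨u, fun a ha => ?_⟩
  obtain ⟨M, rfl⟩ : ∃ M, ψ M = a := ⟨T ⟨a, hsB ha⟩, by simp [ψ]⟩
  exact hconj M

/-- **Inner automorphisms are dense in the unital injective endomorphisms** (Theorem 1(2)):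
if `A` is a unital locally matrix algebra over a field `F`, then for every injective unital
`F`-algebra endomorphism `φ` of `A` and every finite list of elements of `A` there is an
invertible element `u ∈ A` such that `φ(a) = u⁻¹ * a * u` on these elements. -/
theorem innerAutomorphisms_dense (F A : Type*) [Field F] [Ring A] [Algebra F A]
    (hA : IsLocallyMatrix F A)
    (φ : A →ₐ[F] A) (hφ : Function.Injective φ) (s : Finset A) :
    ∃ u : Aˣ, ∀ a ∈ s, φ a = ↑u⁻¹ * a * ↑u :=
  innerAutomorphisms_dense_general F A hA φ s
end

section
/- Let F be a field, A a locally matrix algebra over F of countable dimension, and e ∈ A a nonzero idempotent. Then every derivation of the corner algebra eAe extends to a derivation of A: for every F-linear map d₀ : eAe → eAe with d₀(xy) = d₀(x)y + x d₀(y) for all x, y ∈ eAe, there exists a derivation D of A such that D(x) = d₀(x) for all x ∈ eAe. -/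
set_option synthInstance.maxHeartbeats 1000000
set_option maxHeartbeats 1000000

section AuxMU
variable {A : Type*} [NonUnitalRing A]

/-- A system of matrix units in a (possibly non-unital) ring. -/
def IsMU {n : ℕ} (f : Fin n → Fin n → A) : Prop :=
  ∀ i j k l, f i j * f k l = if j = k then f i l else 0

lemma whitehead {F : Type*} [Field F] [Module F A] [SMulCommClass F A A] [IsScalarTower F A A]
    {n : ℕ} (hn : 0 < n) (g : Fin n → Fin n → A) (hg : IsMU g)
    (v : Fin n → Fin n → A)
    (hv : ∀ i j k l, (if j = k then v i l else 0) = v i j * g k l + g i j * v k l) :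
    ∃ c : A, ∀ i j, c * g i j - g i j * c = v i j := by
  classical
  set i0 : Fin n := ⟨0, hn⟩ with hi0
  set u : A := ∑ i : Fin n, g i i with hu
  set V : A := ∑ i : Fin n, v i i with hV
  have hgu : ∀ i j, g i j * u = g i j := by
    intro i j
    rw [hu, Finset.mul_sum]
    have : ∀ m : Fin n, g i j * g m m = if j = m then g i m else 0 := fun m => hg i j m m
    simp_rw [this]
    simp [Finset.sum_ite_eq]
  have hug : ∀ i j, u * g i j = g i j := by
    intro i j
    rw [hu, Finset.sum_mul]
    have : ∀ m : Fin n, g m m * g i j = if m = i then g m j else 0 := fun m => hg m m i j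
    simp_rw [this]
    simp [Finset.sum_ite_eq']
  have huu : u * u = u := by
    rw [hu, Finset.sum_mul]
    congr 1; funext i
    exact hgu i i
  -- V = V*u + u*V
  have hVsum : V = V * u + u * V := by
    have h1 : ∀ i : Fin n, v i i = v i i * u + g i i * V := by
      intro i
      have := fun k => hv i i k k
      calc v i i = ∑ k : Fin n, (if i = k then v i k else 0) := by
            simp [Finset.sum_ite_eq]
        _ = ∑ k : Fin n, (v i i * g k k + g i i * v k k) := by
            exact Finset.sum_congr rfl fun k _ => this k
        _ = v i i * u + g i i * V := by
            rw [Finset.sum_add_distrib, ← Finset.mul_sum, ← Finset.mul_sum, hu, hV]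
    calc V = ∑ i : Fin n, v i i := hV
      _ = ∑ i : Fin n, (v i i * u + g i i * V) := Finset.sum_congr rfl fun i _ => h1 i
      _ = V * u + u * V := by
          rw [Finset.sum_add_distrib, ← Finset.sum_mul, ← Finset.sum_mul, ← hV, ← hu]
  have huVu : u * V * u = 0 := by
    have h := congrArg (fun t => u * t * u) hVsum
    simp only [mul_add, add_mul] at h
    have e1 : u * (V * u) * u = u * V * u := by
      rw [← mul_assoc, mul_assoc (u*V) u u, huu, mul_assoc]
    have e2 : u * (u * V) * u = u * V * u := by
      rw [← mul_assoc, huu]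
    rw [e1, e2] at h
    exact (left_eq_add.mp h)
  -- the core Whitehead computation, for any system of values satisfying the Leibniz relation
  have key : ∀ v' : Fin n → Fin n → A,
      (∀ i j k l, (if j = k then v' i l else 0) = v' i j * g k l + g i j * v' k l) →
      ∀ j k, (∑ i : Fin n, v' i i0 * g i0 i) * g j k
        - g j k * (∑ i : Fin n, v' i i0 * g i0 i) = v' j k * u := by
    intro v' hv' j k
    have hleft : (∑ i : Fin n, v' i i0 * g i0 i) * g j k = v' j i0 * g i0 k := by
      rw [Finset.sum_mul]
      have : ∀ i : Fin n, v' i i0 * g i0 i * g j k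
          = if i = j then v' i i0 * g i0 k else 0 := by
        intro i
        rw [mul_assoc, hg i0 i j k]
        split <;> simp
      simp_rw [this]
      simp [Finset.sum_ite_eq']
    have hright : g j k * (∑ i : Fin n, v' i i0 * g i0 i)
        = v' j i0 * g i0 k - v' j k * u := by
      rw [Finset.mul_sum]
      have hterm : ∀ i : Fin n, g j k * (v' i i0 * g i0 i)
          = (if k = i then v' j i0 * g i0 i else 0) - v' j k * g i i := by
        intro i
        have h := hv' j k i i0
        have : g j k * v' i i0 = (if k = i then v' j i0 else 0) - v' j k * g i i0 := by
          rw [eq_sub_iff_add_eq, add_comm, ← h]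
        rw [← mul_assoc, this, sub_mul, mul_assoc, hg i i0 i0 i]
        simp only [if_pos rfl]
        split <;> simp
      simp_rw [hterm]
      rw [Finset.sum_sub_distrib]
      congr 1
      · simp [Finset.sum_ite_eq]
      · rw [← Finset.mul_sum, hu]
    rw [hleft, hright]
    abel
  have hugM : ∀ (i j : Fin n) (x : A), u * (g i j * x) = g i j * x := by
    intro i j x; rw [← mul_assoc, hug]
  have hguM : ∀ (i j : Fin n) (x : A), g i j * (u * x) = g i j * x := by
    intro i j x; rw [← mul_assoc, hgu]
  -- the corrected values
  set v1 : Fin n → Fin n → A := fun i j => u * v i j * u with hv1def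
  have hv1 : ∀ i j k l, (if j = k then v1 i l else 0) = v1 i j * g k l + g i j * v1 k l := by
    intro i j k l
    have h := congrArg (fun t => u * t * u) (hv i j k l)
    simp only [mul_add, add_mul, mul_ite, ite_mul, mul_zero, zero_mul] at h
    simp only [hv1def]
    simp only [mul_assoc, hug, hgu, hugM, hguM] at h ⊢
    exact h
  set a1 : A := ∑ i : Fin n, v1 i i0 * g i0 i with ha1
  have hada1 : ∀ j k, a1 * g j k - g j k * a1 = u * (v j k * u) := by
    intro j k
    have h := key v1 hv1 j k
    rw [← ha1] at h
    rw [h]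
    simp only [hv1def, mul_assoc, huu]
  have halpha : ∀ j k, v j k = V * g j k + u * v j k := by
    intro j k
    calc v j k = ∑ i : Fin n, (if i = j then v i k else 0) := by
          simp [Finset.sum_ite_eq']
      _ = ∑ i : Fin n, (v i i * g j k + g i i * v j k) :=
          Finset.sum_congr rfl fun i _ => hv i i j k
      _ = V * g j k + u * v j k := by
          rw [Finset.sum_add_distrib, ← Finset.sum_mul, ← Finset.sum_mul, ← hV, ← hu]
  have hbeta : ∀ j k, v j k = v j k * u + g j k * V := by
    intro j k
    calc v j k = ∑ i : Fin n, (if k = i then v j i else 0) := by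
          simp [Finset.sum_ite_eq]
      _ = ∑ i : Fin n, (v j k * g i i + g j k * v i i) :=
          Finset.sum_congr rfl fun i _ => hv j k i i
      _ = v j k * u + g j k * V := by
          rw [Finset.sum_add_distrib, ← Finset.mul_sum, ← Finset.mul_sum, ← hV, ← hu]
  have h4 : ∀ j k, v j k = u * (v j k * u) + (V * g j k + g j k * V) := by
    intro j k
    calc v j k = V * g j k + u * v j k := halpha j k
      _ = V * g j k + u * (v j k * u + g j k * V) := by rw [← hbeta j k]
      _ = u * (v j k * u) + (V * g j k + g j k * V) := by
          rw [mul_add, hugM]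
          abel
  refine ⟨a1 + (V * u - u * V), ?_⟩
  intro j k
  have z1 : u * (V * g j k) = 0 := by
    conv_lhs => rw [← hug j k]
    rw [← mul_assoc, ← mul_assoc, huVu, zero_mul]
  have z2 : g j k * (V * u) = 0 := by
    conv_lhs => rw [← hgu j k]
    rw [mul_assoc, ← mul_assoc u V u, huVu, mul_zero]
  have hm' : (V * u - u * V) * g j k - g j k * (V * u - u * V) = V * g j k + g j k * V := by
    rw [sub_mul, mul_sub, z2, mul_assoc V u (g j k), hug, mul_assoc u V (g j k), z1,
      ← mul_assoc (g j k) u V, hgu]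
    abel
  have expand : (a1 + (V * u - u * V)) * g j k - g j k * (a1 + (V * u - u * V))
      = (a1 * g j k - g j k * a1) + ((V * u - u * V) * g j k - g j k * (V * u - u * V)) := by
    rw [add_mul, mul_add]
    abel
  rw [expand, hada1 j k, hm']
  exact (h4 j k).symm

lemma keydecomp {F : Type*} [Field F] [Module F A] [SMulCommClass F A A] [IsScalarTower F A A]
    {n r : ℕ} (hr : 0 < r) (hrn : r ≤ n) (f : Fin n → Fin n → A) (hf : IsMU f)
    (e z : A) (he : e = ∑ i ∈ Finset.univ.filter (fun i : Fin n => (i : ℕ) < r), f i i)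
    (hz : ∀ i j : Fin n, (i : ℕ) < r → (j : ℕ) < r → z * f i j = f i j * z) :
    ∃ z₁ z₂ : A, z = z₁ + z₂ ∧ (∀ i j, z₁ * f i j = f i j * z₁) ∧ e * z₂ = 0 ∧ z₂ * e = 0 := by
  classical
  have hef : ∀ i j, e * f i j = if (i : ℕ) < r then f i j else 0 := by
    intro i j
    rw [he, Finset.sum_mul]
    have : ∀ m : Fin n, f m m * f i j = if m = i then f m j else 0 := fun m => hf m m i j
    simp_rw [this]
    rw [Finset.sum_ite_eq']
    simp
  have hfe : ∀ i j, f i j * e = if (j : ℕ) < r then f i j else 0 := by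
    intro i j
    rw [he, Finset.mul_sum]
    have : ∀ m : Fin n, f i j * f m m = if j = m then f i m else 0 := fun m => hf i j m m
    simp_rw [this]
    rw [Finset.sum_ite_eq]
    simp
  have hee : e * e = e := by
    have h : e * e = ∑ m ∈ Finset.univ.filter (fun i : Fin n => (i : ℕ) < r), e * f m m := by
      rw [← Finset.mul_sum, ← he]
    rw [h, Finset.sum_congr rfl (fun m hm => by
      rw [hef, if_pos (Finset.mem_filter.mp hm).2])]
    exact he.symm
  have hez : e * z = z * e := by
    conv_lhs => rw [he, Finset.sum_mul]
    conv_rhs => rw [he, Finset.mul_sum]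
    refine Finset.sum_congr rfl fun m hm => ?_
    rw [Finset.mem_filter] at hm
    exact (hz m m hm.2 hm.2).symm
  set y : A := e * z * e with hy
  have hyze : y = z * e := by rw [hy, hez, mul_assoc, hee]
  have hyez : y = e * z := by rw [hyze, ← hez]
  have hz0l : e * (z - y) = 0 := by
    rw [mul_sub, hyez, ← mul_assoc, hee, sub_self]
  have hz0r : (z - y) * e = 0 := by
    rw [sub_mul, hyze, mul_assoc, hee, sub_self]
  have hrn' : (0 : ℕ) < n := lt_of_lt_of_le hr hrn
  set i0 : Fin n := ⟨0, hrn'⟩ with hi0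
  have hi0r : (i0 : ℕ) < r := hr
  set t : Fin n → A := fun i => f i i0 * y * f i0 i with ht
  set w1 : A := ∑ i : Fin n, t i with hw1
  have hw1comm : ∀ k l, w1 * f k l = f k l * w1 := by
    intro k l
    have hL : w1 * f k l = f k i0 * y * f i0 l := by
      rw [hw1, Finset.sum_mul]
      have : ∀ i : Fin n, t i * f k l = if i = k then f i i0 * y * f i0 l else 0 := by
        intro i
        rw [ht]
        simp only
        rw [mul_assoc (f i i0 * y) (f i0 i) (f k l), hf i0 i k l]
        split <;> simp
      simp_rw [this]
      rw [Finset.sum_ite_eq']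
      simp
    have hR : f k l * w1 = f k i0 * y * f i0 l := by
      rw [hw1, Finset.mul_sum]
      have : ∀ i : Fin n, f k l * t i = if l = i then f k i0 * y * f i0 l else 0 := by
        intro i
        rw [ht]
        simp only
        rw [← mul_assoc, ← mul_assoc, hf k l i i0]
        split
        · next h => subst h; simp [mul_assoc]
        · simp
      simp_rw [this]
      rw [Finset.sum_ite_eq]
      simp
    rw [hL, hR]
  have hfirst : ∑ i ∈ Finset.univ.filter (fun i : Fin n => (i : ℕ) < r), t i = y := by
    have hti : ∀ i ∈ Finset.univ.filter (fun i : Fin n => (i : ℕ) < r), t i = z * f i i := by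
      intro i hi
      rw [Finset.mem_filter] at hi
      have h1 : f i i0 * y = z * f i i0 * e := by
        rw [hy, ← mul_assoc, ← mul_assoc, hfe i i0, if_pos hi0r, ← hz i i0 hi.2 hi0r]
      calc t i = z * f i i0 * e * f i0 i := by rw [ht]; simp only; rw [h1]
        _ = z * f i i := by
            rw [mul_assoc (z * f i i0) e (f i0 i), hef i0 i, if_pos hi0r,
              mul_assoc z (f i i0) (f i0 i), hf i i0 i0 i, if_pos rfl]
    rw [Finset.sum_congr rfl hti, ← Finset.mul_sum, ← he, ← hyze]
  have hsplit : w1 = y + ∑ i ∈ Finset.univ.filter (fun i : Fin n => ¬ (i : ℕ) < r), t i := by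
    rw [hw1, ← Finset.sum_filter_add_sum_filter_not Finset.univ (fun i : Fin n => (i : ℕ) < r) t,
      hfirst]
  set w2 : A := y - w1 with hw2
  have hw2eq : w2 = - ∑ i ∈ Finset.univ.filter (fun i : Fin n => ¬ (i : ℕ) < r), t i := by
    rw [hw2, hsplit]; abel
  have hte1 : ∀ i : Fin n, ¬ (i : ℕ) < r → e * t i = 0 := by
    intro i hi
    rw [ht]
    simp only
    rw [← mul_assoc, ← mul_assoc, hef i i0, if_neg hi, zero_mul, zero_mul]
  have hte2 : ∀ i : Fin n, ¬ (i : ℕ) < r → t i * e = 0 := by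
    intro i hi
    rw [ht]
    simp only
    rw [mul_assoc (f i i0 * y) (f i0 i) e, hfe i0 i, if_neg hi, mul_zero]
  have hew2 : e * w2 = 0 := by
    rw [hw2eq, mul_neg, Finset.mul_sum, Finset.sum_congr rfl
      (fun i hi => hte1 i (Finset.mem_filter.mp hi).2), Finset.sum_const_zero, neg_zero]
  have hw2e : w2 * e = 0 := by
    rw [hw2eq, neg_mul, Finset.sum_mul, Finset.sum_congr rfl
      (fun i hi => hte2 i (Finset.mem_filter.mp hi).2), Finset.sum_const_zero, neg_zero]
  refine ⟨w1, (z - y) + w2, ?_, hw1comm, ?_, ?_⟩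
  · rw [hw2]; abel
  · rw [mul_add, hz0l, hew2, add_zero]
  · rw [add_mul, hz0r, hw2e, add_zero]
end AuxMU

section Adapted

structure AdaptedSys (F A : Type*) [Field F] [NonUnitalRing A] [Module F A]
    [SMulCommClass F A A] [IsScalarTower F A A] (e : A) where
  n : ℕ
  r : ℕ
  f : Fin n → Fin n → A
  hr : 0 < r
  hrn : r ≤ n
  hmu : IsMU f
  he : e = ∑ i ∈ Finset.univ.filter (fun i : Fin n => (i : ℕ) < r), f i i

variable {F A : Type*} [Field F] [NonUnitalRing A] [Module F A]
  [SMulCommClass F A A] [IsScalarTower F A A]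

/-- The span of a matrix-unit system. -/
def AdaptedSys.S {e : A} (g : AdaptedSys F A e) : Submodule F A :=
  Submodule.span F (Set.range (fun p : Fin g.n × Fin g.n => g.f p.1 p.2))

lemma exists_adapted (hA : IsLocallyMatrix F A)
    (e : A) (he : e * e = e) (hne : e ≠ 0) (s : Finset A) :
    ∃ g : AdaptedSys F A e, (s : Set A) ⊆ (g.S : Set A) := by
  classical
  obtain ⟨B, n, hn, hsub, φ, hφ⟩ := hA (insert e s)
  have heB : e ∈ B := hsub (Finset.mem_insert_self e s)
  -- the linear equivalence with the endomorphism algebra of V = Fin n → F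
  set V := (Fin n → F)
  set Ψ : B ≃ₗ[F] (Module.End F V) :=
    (LinearEquiv.ofBijective (φ : B →ₗ[F] Matrix (Fin n) (Fin n) F) hφ).trans
      (Matrix.toLinAlgEquiv' : Matrix (Fin n) (Fin n) F ≃ₐ[F] _).toLinearEquiv with hΨ
  have hΨmul : ∀ x y : B, Ψ (x * y) = Ψ x * Ψ y := by
    intro x y
    have h1 : (φ : B →ₗ[F] Matrix (Fin n) (Fin n) F) (x * y) = φ x * φ y := map_mul φ x y
    simp only [hΨ, LinearEquiv.trans_apply, LinearEquiv.ofBijective_apply,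
      AlgEquiv.toLinearEquiv_apply]
    exact (congrArg Matrix.toLinAlgEquiv' h1).trans (map_mul _ _ _)
  have hΨsymm_mul : ∀ x y : Module.End F V, Ψ.symm (x * y) = Ψ.symm x * Ψ.symm y := by
    intro x y
    apply Ψ.injective
    rw [hΨmul, Ψ.apply_symm_apply, Ψ.apply_symm_apply, Ψ.apply_symm_apply]
  set e' : B := ⟨e, heB⟩ with he'
  set E : Module.End F V := Ψ e' with hE
  have hEE : E * E = E := by
    rw [hE, ← hΨmul]
    congr 1
    exact Subtype.ext he
  have hEne : E ≠ 0 := by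
    rw [hE]
    intro h
    apply hne
    have h0 : e' = 0 := by
      apply Ψ.injective
      rw [LinearEquiv.map_zero]
      exact h
    simpa [he'] using congrArg Subtype.val h0
  -- E is a projection
  have hfix : ∀ x ∈ LinearMap.range E, E x = x := by
    rintro _ ⟨y, rfl⟩
    have := congrArg (fun (T : Module.End F V) => T y) hEE
    simpa using this
  have hproj : LinearMap.IsProj (LinearMap.range E) E :=
    ⟨fun x => LinearMap.mem_range_self E x, hfix⟩
  have hcompl : IsCompl (LinearMap.range E) (LinearMap.ker E) := hproj.isCompl
  set r := Module.finrank F (LinearMap.range E) with hrdef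
  set r' := Module.finrank F (LinearMap.ker E) with hr'def
  have hrank : r + r' = n := by
    rw [hrdef, hr'def]
    rw [LinearMap.finrank_range_add_finrank_ker]
    simp [V]
  have hr0 : 0 < r := by
    rcases Nat.eq_zero_or_pos r with h | h
    · exfalso
      rw [hrdef, Submodule.finrank_eq_zero] at h
      exact hEne (LinearMap.range_eq_bot.mp h)
    · exact h
  have hrle : r ≤ n := by omega
  -- an adapted basis
  let bR : Module.Basis (Fin r) F (LinearMap.range E) := Module.finBasis F _
  let bK : Module.Basis (Fin r') F (LinearMap.ker E) := Module.finBasis F _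
  let w : Module.Basis (Fin n) F V :=
    ((bR.prod bK).map (Submodule.prodEquivOfIsCompl _ _ hcompl)).reindex
      (finSumFinEquiv.trans (finCongr hrank))
  have hw : ∀ i : Fin n, w i = (Submodule.prodEquivOfIsCompl _ _ hcompl)
      ((bR.prod bK) ((finSumFinEquiv.trans (finCongr hrank)).symm i)) := by
    intro i
    simp [w, Module.Basis.reindex_apply, Module.Basis.map_apply]
  have hwE : ∀ i : Fin n, E (w i) = if (i : ℕ) < r then w i else 0 := by
    intro i
    by_cases hi : (i : ℕ) < r
    · have hidx : ((finSumFinEquiv.trans (finCongr hrank)).symm i) = Sum.inl ⟨(i : ℕ), hi⟩ := by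
        rw [Equiv.symm_apply_eq]
        apply Fin.ext
        simp
      have hval : ((bR.prod bK) (Sum.inl ⟨(i : ℕ), hi⟩)) = (bR ⟨(i : ℕ), hi⟩, 0) := by
        ext : 1
        · exact Module.Basis.prod_apply_inl_fst _ _ _
        · exact Module.Basis.prod_apply_inl_snd _ _ _
      have hwi : w i = ↑(bR ⟨(i : ℕ), hi⟩) := by
        rw [hw, hidx, hval, Submodule.coe_prodEquivOfIsCompl']
        simp
      rw [if_pos hi, hwi]
      exact hfix _ (bR ⟨(i : ℕ), hi⟩).2
    · have hi' : r + ((i : ℕ) - r) = (i : ℕ) := by omega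
      have hlt : (i : ℕ) - r < r' := by omega
      have hidx : ((finSumFinEquiv.trans (finCongr hrank)).symm i) = Sum.inr ⟨(i : ℕ) - r, hlt⟩ := by
        rw [Equiv.symm_apply_eq]
        apply Fin.ext
        simp [hi']
      have hval : ((bR.prod bK) (Sum.inr ⟨(i : ℕ) - r, hlt⟩)) = (0, bK ⟨(i : ℕ) - r, hlt⟩) := by
        ext : 1
        · exact Module.Basis.prod_apply_inr_fst _ _ _
        · exact Module.Basis.prod_apply_inr_snd _ _ _
      have hwi : w i = ↑(bK ⟨(i : ℕ) - r, hlt⟩) := by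
        rw [hw, hidx, hval, Submodule.coe_prodEquivOfIsCompl']
        simp
      rw [if_neg hi, hwi]
      exact LinearMap.mem_ker.mp (bK ⟨(i : ℕ) - r, hlt⟩).2
  -- the standard endomorphism units
  set sE : Fin n → Fin n → Module.End F V := fun i j => (w.coord j).smulRight (w i) with hsE
  have hsEapp : ∀ i j x, sE i j x = (w.repr x j) • w i := by
    intro i j x
    simp [hsE, Module.Basis.coord_apply]
  have hsMU : IsMU sE := by
    intro i j k l
    refine LinearMap.ext fun x => ?_
    by_cases h : j = k
    · subst h
      simp [Module.End.mul_apply, hsEapp, Module.Basis.repr_self, Finsupp.single_apply, smul_smul]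
    · rw [if_neg h]
      simp [Module.End.mul_apply, hsEapp, Module.Basis.repr_self, Finsupp.single_apply, Ne.symm h]
  have hEsum : E = ∑ i ∈ Finset.univ.filter (fun i : Fin n => (i : ℕ) < r), sE i i := by
    refine w.ext fun m => ?_
    rw [LinearMap.sum_apply, hwE m]
    have : ∀ i : Fin n, sE i i (w m) = if m = i then w i else 0 := by
      intro i
      rw [hsEapp, Module.Basis.repr_self, Finsupp.single_apply]
      split <;> simp
    simp_rw [this]
    rw [Finset.sum_ite_eq]
    simp only [Finset.mem_filter, Finset.mem_univ, true_and]
  have hspanE : ∀ T : Module.End F V,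
      T = ∑ p ∈ (Finset.univ : Finset (Fin n × Fin n)), (w.repr (T (w p.2)) p.1) • sE p.1 p.2 := by
    intro T
    refine w.ext fun m => ?_
    rw [LinearMap.sum_apply, Fintype.sum_prod_type]
    have hinner : ∀ i : Fin n, (∑ j : Fin n, ((w.repr (T (w j)) i) • sE i j) (w m))
        = (w.repr (T (w m)) i) • w i := by
      intro i
      have hterm : ∀ j : Fin n, ((w.repr (T (w j)) i) • sE i j) (w m)
          = if m = j then (w.repr (T (w j)) i) • w i else 0 := by
        intro j
        rw [LinearMap.smul_apply, hsEapp, Module.Basis.repr_self, Finsupp.single_apply]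
        split <;> simp
      simp_rw [hterm]
      rw [Finset.sum_ite_eq]
      simp
    simp_rw [hinner]
    exact (w.sum_repr (T (w m))).symm
  -- transport everything through Ψ.symm
  have hff : IsMU (fun i j => ((Ψ.symm (sE i j) : B) : A)) := by
    intro i j k l
    rw [← MulMemClass.coe_mul, ← hΨsymm_mul, hsMU i j k l]
    split
    · rfl
    · rw [LinearEquiv.map_zero]
      exact ZeroMemClass.coe_zero _
  have hfe : e = ∑ i ∈ Finset.univ.filter (fun i : Fin n => (i : ℕ) < r),
      ((Ψ.symm (sE i i) : B) : A) := by
    have h1 : e' = Ψ.symm E := by rw [hE, Ψ.symm_apply_apply]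
    have h2 : (e' : A) = ((Ψ.symm E : B) : A) := by rw [h1]
    rw [show e = (e' : A) from rfl, h2, hEsum, map_sum]
    exact AddSubmonoidClass.coe_finset_sum _ _
  refine ⟨⟨n, r, fun i j => ((Ψ.symm (sE i j) : B) : A), hr0, hrle, hff, hfe⟩, ?_⟩
  intro x hx
  have hxB : x ∈ B := hsub (by simp [hx])
  have hb := hspanE (Ψ ⟨x, hxB⟩)
  have hb2 := congrArg Ψ.symm hb
  rw [Ψ.symm_apply_apply, map_sum] at hb2
  simp_rw [map_smul] at hb2
  have hb3 := congrArg (Subtype.val) hb2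
  rw [AddSubmonoidClass.coe_finset_sum] at hb3
  simp_rw [SetLike.val_smul] at hb3
  show x ∈ (Submodule.span F (Set.range (fun p : Fin n × Fin n => ((Ψ.symm (sE p.1 p.2) : B) : A))) : Set A)
  rw [hb3]
  exact Submodule.sum_mem _ fun p _ => Submodule.smul_mem _ _ (Submodule.subset_span ⟨p, rfl⟩)
end Adapted

def corner (F A : Type*) [Field F] [NonUnitalRing A] [Module F A]
    [SMulCommClass F A A] [IsScalarTower F A A] (e : A) :
    NonUnitalSubalgebra F A where
  carrier := Set.range fun x : A => e * x * e
  add_mem' := by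
    rintro _ _ ⟨x, rfl⟩ ⟨y, rfl⟩
    exact ⟨x + y, by simp [mul_add, add_mul]⟩
  zero_mem' := ⟨0, by simp⟩
  mul_mem' := by
    rintro _ _ ⟨x, rfl⟩ ⟨y, rfl⟩
    refine ⟨x * e * e * y, ?_⟩
    simp only [mul_assoc]
  smul_mem' := by
    rintro c _ ⟨x, rfl⟩
    exact ⟨c • x, by simp [smul_mul_assoc, mul_smul_comm]⟩

section CornerPhi
variable {F A : Type*} [Field F] [NonUnitalRing A] [Module F A]
  [SMulCommClass F A A] [IsScalarTower F A A]

lemma mem_corner_iff {e x : A} : x ∈ corner F A e ↔ ∃ a, e * a * e = x := Iff.rfl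

lemma corner_idem {e : A} (he : e * e = e) {x : A} (hx : x ∈ corner F A e) :
    e * x * e = x := by
  obtain ⟨a, rfl⟩ := mem_corner_iff.mp hx
  have h1 : e * (e * a * e) = e * a * e := by
    rw [← mul_assoc, ← mul_assoc, he]
  have h2 : e * a * e * e = e * a * e := by rw [mul_assoc (e*a) e e, he]
  rw [h1, h2]

/-- The linear map `z ↦ d₀(e z e)` on all of `A`. -/
noncomputable def Phi (e : A) (d₀ : corner F A e →ₗ[F] corner F A e) : A →ₗ[F] A where
  toFun z := (d₀ ⟨e * z * e, ⟨z, rfl⟩⟩ : A)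
  map_add' x y := by
    have h : (⟨e * (x + y) * e, ⟨x + y, rfl⟩⟩ : corner F A e)
        = ⟨e * x * e, ⟨x, rfl⟩⟩ + ⟨e * y * e, ⟨y, rfl⟩⟩ := by
      apply Subtype.ext
      simp [mul_add, add_mul]
    show (d₀ ⟨e * (x + y) * e, ⟨x + y, rfl⟩⟩ : A)
      = (d₀ ⟨e * x * e, ⟨x, rfl⟩⟩ : A) + (d₀ ⟨e * y * e, ⟨y, rfl⟩⟩ : A)
    rw [h, map_add]
    simp
  map_smul' c x := by
    have h : (⟨e * (c • x) * e, ⟨c • x, rfl⟩⟩ : corner F A e)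
        = c • (⟨e * x * e, ⟨x, rfl⟩⟩ : corner F A e) := by
      apply Subtype.ext
      simp [mul_smul_comm, smul_mul_assoc]
    show (d₀ ⟨e * (c • x) * e, ⟨c • x, rfl⟩⟩ : A)
      = c • (d₀ ⟨e * x * e, ⟨x, rfl⟩⟩ : A)
    rw [h, map_smul]
    simp

lemma Phi_apply (e : A) (d₀ : corner F A e →ₗ[F] corner F A e) (z : A) :
    Phi e d₀ z = (d₀ ⟨e * z * e, ⟨z, rfl⟩⟩ : A) := rfl

lemma Phi_corner {e : A} (he : e * e = e) (d₀ : corner F A e →ₗ[F] corner F A e)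
    (x : corner F A e) : Phi e d₀ (x : A) = (d₀ x : A) := by
  have h : (⟨e * (x : A) * e, ⟨(x : A), rfl⟩⟩ : corner F A e) = x :=
    Subtype.ext (corner_idem he x.2)
  rw [Phi_apply, h]

lemma Phi_leibniz {e : A} (he : e * e = e) (d₀ : corner F A e →ₗ[F] corner F A e)
    (hd₀ : ∀ x y : corner F A e, d₀ (x * y) = d₀ x * y + x * d₀ y)
    {x y : A} (hx : x ∈ corner F A e) (hy : y ∈ corner F A e) :
    Phi e d₀ (x * y) = Phi e d₀ x * y + x * Phi e d₀ y := by
  have h1 : x * y = ((⟨x, hx⟩ * ⟨y, hy⟩ : corner F A e) : A) := rfl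
  rw [h1, Phi_corner he, hd₀]
  rw [show Phi e d₀ x = (d₀ ⟨x, hx⟩ : A) from Phi_corner he d₀ ⟨x, hx⟩,
    show Phi e d₀ y = (d₀ ⟨y, hy⟩ : A) from Phi_corner he d₀ ⟨y, hy⟩]
  simp

/-- inner derivation associated to `b`. -/
noncomputable def adm (b : A) : A →ₗ[F] A := LinearMap.mulLeft F b - LinearMap.mulRight F b

lemma adm_apply (b x : A) : (adm (F := F) b) x = b * x - x * b := rfl

end CornerPhi

section SysLemmas
variable {F A : Type*} [Field F] [NonUnitalRing A] [Module F A]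
  [SMulCommClass F A A] [IsScalarTower F A A] {e : A}

namespace AdaptedSys

lemma mem_S (g : AdaptedSys F A e) (i j : Fin g.n) : g.f i j ∈ g.S :=
  Submodule.subset_span ⟨(i, j), rfl⟩

lemma ef_generic {n r : ℕ} (f : Fin n → Fin n → A) (hf : IsMU f) (e' : A)
    (he' : e' = ∑ i ∈ Finset.univ.filter (fun i : Fin n => (i : ℕ) < r), f i i) (i j : Fin n) :
    e' * f i j = if (i : ℕ) < r then f i j else 0 := by
  rw [he', Finset.sum_mul]
  have : ∀ m : Fin n, f m m * f i j = if m = i then f m j else 0 :=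
    fun m => hf m m i j
  simp_rw [this]
  rw [Finset.sum_ite_eq']
  simp

lemma fe_generic {n r : ℕ} (f : Fin n → Fin n → A) (hf : IsMU f) (e' : A)
    (he' : e' = ∑ i ∈ Finset.univ.filter (fun i : Fin n => (i : ℕ) < r), f i i) (i j : Fin n) :
    f i j * e' = if (j : ℕ) < r then f i j else 0 := by
  rw [he', Finset.mul_sum]
  have : ∀ m : Fin n, f i j * f m m = if j = m then f i m else 0 :=
    fun m => hf i j m m
  simp_rw [this]
  rw [Finset.sum_ite_eq]
  simp

lemma ef (g : AdaptedSys F A e) (i j : Fin g.n) :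
    e * g.f i j = if (i : ℕ) < g.r then g.f i j else 0 :=
  ef_generic g.f g.hmu e g.he i j

lemma fe (g : AdaptedSys F A e) (i j : Fin g.n) :
    g.f i j * e = if (j : ℕ) < g.r then g.f i j else 0 :=
  fe_generic g.f g.hmu e g.he i j

/-- corner units -/
def cu (g : AdaptedSys F A e) (i j : Fin g.r) : A :=
  g.f (Fin.castLE g.hrn i) (Fin.castLE g.hrn j)

lemma cu_def (g : AdaptedSys F A e) (i j : Fin g.r) :
    g.cu i j = g.f (Fin.castLE g.hrn i) (Fin.castLE g.hrn j) := rfl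

lemma cu_mu (g : AdaptedSys F A e) : IsMU g.cu := by
  intro i j k l
  rw [cu_def, cu_def, g.hmu]
  rcases eq_or_ne j k with h | h
  · subst h
    rw [if_pos rfl, if_pos rfl, cu_def]
  · have h2 : ¬ (Fin.castLE g.hrn j = Fin.castLE g.hrn k) :=
      fun hh => h (Fin.castLE_inj.mp hh)
    simp [h, h2]

lemma P_cu (g : AdaptedSys F A e) (i j : Fin g.r) : e * g.cu i j * e = g.cu i j := by
  rw [cu_def, g.ef, if_pos (by simpa using i.2), g.fe, if_pos (by simpa using j.2)]

lemma cu_mem_corner (g : AdaptedSys F A e) (i j : Fin g.r) : g.cu i j ∈ corner F A e :=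
  ⟨g.cu i j, g.P_cu i j⟩

/-- span of corner units -/
def T (g : AdaptedSys F A e) : Submodule F A :=
  Submodule.span F (Set.range (fun p : Fin g.r × Fin g.r => g.cu p.1 p.2))

lemma cu_mem_T (g : AdaptedSys F A e) (i j : Fin g.r) : g.cu i j ∈ g.T :=
  Submodule.subset_span ⟨(i, j), rfl⟩

lemma T_le_S (g : AdaptedSys F A e) : g.T ≤ g.S := by
  rw [T]
  refine Submodule.span_le.mpr ?_
  rintro _ ⟨p, rfl⟩
  exact g.mem_S _ _

lemma e_mem (g : AdaptedSys F A e) : e ∈ g.S := by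
  have h : (∑ i ∈ Finset.univ.filter (fun i : Fin g.n => (i : ℕ) < g.r), g.f i i) ∈ g.S :=
    Submodule.sum_mem _ fun i _ => g.mem_S i i
  rwa [← g.he] at h

lemma S_mul (g : AdaptedSys F A e) : ∀ x ∈ g.S, ∀ y ∈ g.S, x * y ∈ g.S := by
  intro x hx
  induction hx using Submodule.span_induction with
  | mem z hz =>
      obtain ⟨p, rfl⟩ := hz
      intro y hy
      induction hy using Submodule.span_induction with
      | mem w hw =>
          obtain ⟨q, rfl⟩ := hw
          rw [g.hmu]
          split
          · exact g.mem_S _ _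
          · exact zero_mem _
      | zero => rw [mul_zero]; exact zero_mem _
      | add a b _ _ ha hb => rw [mul_add]; exact add_mem ha hb
      | smul c a _ ha => rw [mul_smul_comm]; exact Submodule.smul_mem _ _ ha
  | zero => intro y hy; rw [zero_mul]; exact zero_mem _
  | add a b _ _ ha hb => intro y hy; rw [add_mul]; exact add_mem (ha y hy) (hb y hy)
  | smul c a _ ha => intro y hy; rw [smul_mul_assoc]; exact Submodule.smul_mem _ _ (ha y hy)

lemma proj_mem_T (g : AdaptedSys F A e) : ∀ x ∈ g.S, e * x * e ∈ g.T := by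
  intro x hx
  induction hx using Submodule.span_induction with
  | mem z hz =>
      obtain ⟨p, rfl⟩ := hz
      rw [g.ef]
      split
      · next h =>
          rw [g.fe]
          split
          · next h' =>
              have : g.f p.1 p.2 = g.cu ⟨(p.1 : ℕ), h⟩ ⟨(p.2 : ℕ), h'⟩ := by
                show _ = g.f _ _
                congr 1 <;> exact Fin.ext rfl
              rw [this]
              exact g.cu_mem_T _ _
          · exact zero_mem _
      · rw [zero_mul]
        exact zero_mem _
  | zero => rw [mul_zero, zero_mul]; exact zero_mem _
  | add a b _ _ ha hb => rw [mul_add, add_mul]; exact add_mem ha hb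
  | smul c a _ ha => rw [mul_smul_comm, smul_mul_assoc]; exact Submodule.smul_mem _ _ ha

lemma T_idem (g : AdaptedSys F A e) : ∀ x ∈ g.T, e * x * e = x := by
  intro x hx
  induction hx using Submodule.span_induction with
  | mem z hz =>
      obtain ⟨p, rfl⟩ := hz
      exact g.P_cu _ _
  | zero => rw [mul_zero, zero_mul]
  | add a b _ _ ha hb => rw [mul_add, add_mul, ha, hb]
  | smul c a _ ha => rw [mul_smul_comm, smul_mul_assoc, ha]

lemma mem_T_of (g : AdaptedSys F A e) {x : A} (hx : x ∈ g.S) (hx' : e * x * e = x) :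
    x ∈ g.T := by
  rw [← hx']
  exact g.proj_mem_T x hx

lemma T_mem_corner (g : AdaptedSys F A e) {x : A} (hx : x ∈ g.T) : x ∈ corner F A e :=
  ⟨x, g.T_idem x hx⟩

end AdaptedSys

lemma linear_eq_on_T {e : A} {g : AdaptedSys F A e} {φ ψ : A →ₗ[F] A}
    (h : ∀ i j : Fin g.r, φ (g.cu i j) = ψ (g.cu i j)) : ∀ x ∈ g.T, φ x = ψ x := by
  intro x hx
  induction hx using Submodule.span_induction with
  | mem z hz => obtain ⟨p, rfl⟩ := hz; exact h p.1 p.2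
  | zero => simp
  | add a b _ _ ha hb => rw [map_add, map_add, ha, hb]
  | smul c a _ ha => rw [map_smul, map_smul, ha]

lemma linear_eq_on_S {e : A} {g : AdaptedSys F A e} {φ ψ : A →ₗ[F] A}
    (h : ∀ i j : Fin g.n, φ (g.f i j) = ψ (g.f i j)) : ∀ x ∈ g.S, φ x = ψ x := by
  intro x hx
  induction hx using Submodule.span_induction with
  | mem z hz => obtain ⟨p, rfl⟩ := hz; exact h p.1 p.2
  | zero => simp
  | add a b _ _ ha hb => rw [map_add, map_add, ha, hb]
  | smul c a _ ha => rw [map_smul, map_smul, ha]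

lemma whitehead_corner {e : A} (he : e * e = e) (d₀ : corner F A e →ₗ[F] corner F A e)
    (hd₀ : ∀ x y : corner F A e, d₀ (x * y) = d₀ x * y + x * d₀ y)
    (g : AdaptedSys F A e) :
    ∃ b : A, ∀ i j : Fin g.r,
      b * g.cu i j - g.cu i j * b = Phi e d₀ (g.cu i j) := by
  refine whitehead (F := F) g.hr g.cu g.cu_mu (fun i j => Phi e d₀ (g.cu i j)) ?_
  intro i j k l
  rw [← Phi_leibniz he d₀ hd₀ (g.cu_mem_corner i j) (g.cu_mem_corner k l), g.cu_mu i j k l]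
  split
  · rfl
  · exact (map_zero _).symm

/-- the corner compatibility condition for an inner element. -/
def CC {e : A} (d₀ : corner F A e →ₗ[F] corner F A e) (g : AdaptedSys F A e) (c : A) : Prop :=
  ∀ i j : Fin g.r, c * g.cu i j - g.cu i j * c = Phi e d₀ (g.cu i j)

lemma chain_step (hA : IsLocallyMatrix F A) {e : A} (he : e * e = e) (hne : e ≠ 0)
    (d₀ : corner F A e →ₗ[F] corner F A e) (g : AdaptedSys F A e) (t : A) :
    ∃ g' : AdaptedSys F A e, g.S ≤ g'.S ∧ t ∈ g'.S ∧ ∀ x ∈ g.S, Phi e d₀ x ∈ g'.S := by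
  classical
  obtain ⟨g', hsub⟩ := exists_adapted hA e he hne
    ((Finset.image (fun p : Fin g.n × Fin g.n => g.f p.1 p.2) Finset.univ ∪
      Finset.image (fun p : Fin g.n × Fin g.n => Phi e d₀ (g.f p.1 p.2)) Finset.univ) ∪ {t})
  refine ⟨g', ?_, ?_, ?_⟩
  · refine Submodule.span_le.mpr ?_
    rintro _ ⟨p, rfl⟩
    exact hsub (Finset.mem_coe.mpr (Finset.mem_union_left _ (Finset.mem_union_left _
      (Finset.mem_image_of_mem _ (Finset.mem_univ p)))))
  · exact hsub (Finset.mem_coe.mpr (Finset.mem_union_right _ (Finset.mem_singleton_self t)))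
  · intro x hx
    induction hx using Submodule.span_induction with
    | mem z hz =>
        obtain ⟨p, rfl⟩ := hz
        exact hsub (Finset.mem_coe.mpr (Finset.mem_union_left _ (Finset.mem_union_right _
          (Finset.mem_image_of_mem _ (Finset.mem_univ p)))))
    | zero => rw [map_zero]; exact zero_mem _
    | add a b _ _ ha hb => rw [map_add]; exact add_mem ha hb
    | smul c a _ ha => rw [map_smul]; exact Submodule.smul_mem _ _ ha

lemma cstep {e : A} (he : e * e = e) (d₀ : corner F A e →ₗ[F] corner F A e)
    (hd₀ : ∀ x y : corner F A e, d₀ (x * y) = d₀ x * y + x * d₀ y)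
    (g g' : AdaptedSys F A e) (hS : g.S ≤ g'.S) (c : A) (hc : CC d₀ g c) :
    ∃ c', CC d₀ g' c' ∧
      ∀ i j : Fin g.n, c' * g.f i j - g.f i j * c' = c * g.f i j - g.f i j * c := by
  obtain ⟨b, hb⟩ := whitehead_corner he d₀ hd₀ g'
  have hbT : ∀ x ∈ g'.T, b * x - x * b = Phi e d₀ x :=
    linear_eq_on_T (g := g') (φ := adm (F := F) b) (ψ := Phi e d₀) (fun i j => hb i j)
  have hz : ∀ i j : Fin g.n, (i : ℕ) < g.r → (j : ℕ) < g.r →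
      (c - b) * g.f i j = g.f i j * (c - b) := by
    intro i j hi hj
    have hcu : g.f i j = g.cu ⟨(i : ℕ), hi⟩ ⟨(j : ℕ), hj⟩ := by
      rw [AdaptedSys.cu_def]
      congr 1 <;> exact Fin.ext rfl
    have h1 : c * g.f i j - g.f i j * c = Phi e d₀ (g.f i j) := by
      rw [hcu]; exact hc _ _
    have h2 : b * g.f i j - g.f i j * b = Phi e d₀ (g.f i j) := by
      rw [hcu]
      exact hbT _ (g'.mem_T_of (hS (g.T_le_S (g.cu_mem_T _ _))) (g.P_cu _ _))
    have h3 : (c - b) * g.f i j - g.f i j * (c - b) = 0 := by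
      calc (c - b) * g.f i j - g.f i j * (c - b)
          = (c * g.f i j - g.f i j * c) - (b * g.f i j - g.f i j * b) := by
            rw [sub_mul, mul_sub]; abel
        _ = 0 := by rw [h1, h2, sub_self]
    exact sub_eq_zero.mp h3
  obtain ⟨z₁, z₂, hzsum, hz₁, hez₂, hz₂e⟩ :=
    keydecomp (F := F) g.hr g.hrn g.f g.hmu e (c - b) g.he hz
  have hcb : c - z₁ = b + z₂ := by
    have h : c = b + (z₁ + z₂) := by rw [← hzsum]; abel
    rw [h]; abel
  refine ⟨c - z₁, ?_, ?_⟩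
  · intro i j
    rw [hcb]
    have hz₂l : z₂ * g'.cu i j = 0 := by
      conv_lhs => rw [← g'.P_cu i j]
      rw [← mul_assoc, ← mul_assoc, hz₂e, zero_mul, zero_mul]
    have hz₂r : g'.cu i j * z₂ = 0 := by
      conv_lhs => rw [← g'.P_cu i j]
      rw [mul_assoc, hez₂, mul_zero]
    rw [add_mul, mul_add, hz₂l, hz₂r, add_zero, add_zero]
    exact hb i j
  · intro i j
    rw [sub_mul, mul_sub, hz₁ i j]
    abel

end SysLemmas
/-- **Lemma 6**: let `A` be a locally matrix algebra of countable dimension over a field `F`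
and let `e ∈ A` be a nonzero idempotent.  Then every derivation of the corner algebra `eAe`
extends to a derivation of `A`. -/
theorem derivation_of_corner_extends (F A : Type*) [Field F] [NonUnitalRing A] [Module F A]
    [SMulCommClass F A A] [IsScalarTower F A A]
    (hA : IsLocallyMatrix F A) (hcnt : Module.rank F A ≤ Cardinal.aleph0)
    (e : A) (he : e * e = e) (hne : e ≠ 0)
    (d₀ : corner F A e →ₗ[F] corner F A e)
    (hd₀ : ∀ x y : corner F A e, d₀ (x * y) = d₀ x * y + x * d₀ y) :
    ∃ D : A →ₗ[F] A, (∀ x y : A, D (x * y) = D x * y + x * D y) ∧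
      ∀ x : corner F A e, D (x : A) = (d₀ x : A) := by
  classical
  -- a countable spanning family
  obtain ⟨a, ha⟩ : ∃ a : ℕ → A, ∀ x : A, x ∈ Submodule.span F (Set.range a) := by
    set b := Module.Basis.ofVectorSpace F A
    have hcard : Cardinal.mk (Module.Basis.ofVectorSpaceIndex F A) ≤ Cardinal.aleph0 := by
      rw [b.mk_eq_rank'']
      exact hcnt
    have hcountable : Countable (Module.Basis.ofVectorSpaceIndex F A) :=
      Cardinal.mk_le_aleph0_iff.mp hcard
    rcases isEmpty_or_nonempty (Module.Basis.ofVectorSpaceIndex F A) with hemp | hnemp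
    · exfalso
      apply hne
      have h1 : Set.range (b : _ → A) = ∅ := Set.range_eq_empty _
      have h2 := b.span_eq
      rw [h1, Submodule.span_empty] at h2
      have : e ∈ (⊥ : Submodule F A) := by rw [h2]; trivial
      simpa using this
    · obtain ⟨f, hf⟩ := Countable.exists_injective_nat (Module.Basis.ofVectorSpaceIndex F A)
      refine ⟨(b : _ → A) ∘ Function.invFun f, ?_⟩
      intro x
      have hsurj : Function.Surjective (Function.invFun f) := Function.invFun_surjective hf
      have hrange : Set.range ((b : _ → A) ∘ Function.invFun f) = Set.range (b : _ → A) := by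
        rw [Set.range_comp, hsurj.range_eq, Set.image_univ]
      rw [hrange, b.span_eq]
      trivial
  -- the chain of adapted systems
  let G : ℕ → AdaptedSys F A e := fun k =>
    Nat.rec (Classical.choose (exists_adapted hA e he hne ∅))
      (fun k g => Classical.choose (chain_step hA he hne d₀ g (a k))) k
  have hGstep : ∀ k, (G k).S ≤ (G (k+1)).S ∧ a k ∈ (G (k+1)).S ∧
      ∀ x ∈ (G k).S, Phi e d₀ x ∈ (G (k+1)).S := fun k =>
    Classical.choose_spec (chain_step hA he hne d₀ (G k) (a k))
  have hmono : ∀ k l, k ≤ l → (G k).S ≤ (G l).S := by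
    intro k l h
    induction l, h using Nat.le_induction with
    | base => exact le_rfl
    | succ m hkm ih => exact ih.trans (hGstep m).1
  -- exhaustion
  have hex : ∀ x : A, ∃ k, x ∈ (G k).S := by
    intro x
    have hdir : Directed (· ≤ ·) (fun k => (G k).S) :=
      Monotone.directed_le (fun k l h => hmono k l h)
    have hsub : Submodule.span F (Set.range a) ≤ ⨆ k, (G k).S := by
      rw [Submodule.span_le]
      rintro _ ⟨k, rfl⟩
      exact Submodule.mem_iSup_of_mem (k+1) (hGstep k).2.1
    exact (Submodule.mem_iSup_of_directed _ hdir).mp (hsub (ha x))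
  -- the sequence of inner elements
  have base : ∃ c, CC d₀ (G 0) c := by
    obtain ⟨b, hb⟩ := whitehead_corner he d₀ hd₀ (G 0)
    exact ⟨b, hb⟩
  let cs : ∀ k : ℕ, {c : A // CC d₀ (G k) c} := fun k =>
    Nat.rec ⟨Classical.choose base, Classical.choose_spec base⟩
      (fun k c => ⟨Classical.choose (cstep he d₀ hd₀ (G k) (G (k+1)) (hGstep k).1 c.1 c.2),
        (Classical.choose_spec (cstep he d₀ hd₀ (G k) (G (k+1)) (hGstep k).1 c.1 c.2)).1⟩) k
  have hcomp : ∀ k, ∀ i j : Fin (G k).n,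
      (cs (k+1)).1 * (G k).f i j - (G k).f i j * (cs (k+1)).1
        = (cs k).1 * (G k).f i j - (G k).f i j * (cs k).1 := fun k =>
    (Classical.choose_spec (cstep he d₀ hd₀ (G k) (G (k+1)) (hGstep k).1 (cs k).1 (cs k).2)).2
  have hcompS : ∀ k, ∀ x ∈ (G k).S,
      (cs (k+1)).1 * x - x * (cs (k+1)).1 = (cs k).1 * x - x * (cs k).1 := fun k =>
    linear_eq_on_S (g := G k) (φ := adm (F := F) (cs (k+1)).1) (ψ := adm (F := F) (cs k).1)
      (hcomp k)
  have hstab : ∀ k l, k ≤ l → ∀ x ∈ (G k).S,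
      (cs l).1 * x - x * (cs l).1 = (cs k).1 * x - x * (cs k).1 := by
    intro k l h
    induction l, h using Nat.le_induction with
    | base => intro x _; rfl
    | succ m hkm ih =>
        intro x hx
        rw [hcompS m x (hmono k m hkm hx), ih x hx]
  have hCCT : ∀ k, ∀ x ∈ (G k).T, (cs k).1 * x - x * (cs k).1 = Phi e d₀ x := fun k =>
    linear_eq_on_T (g := G k) (φ := adm (F := F) (cs k).1) (ψ := Phi e d₀)
      (fun i j => (cs k).2 i j)
  -- the derivation
  let N : A → ℕ := fun x => Classical.choose (hex x)
  have hN : ∀ x, x ∈ (G (N x)).S := fun x => Classical.choose_spec (hex x)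
  let Df : A → A := fun x => (cs (N x)).1 * x - x * (cs (N x)).1
  have hDval : ∀ (k : ℕ) (x : A), x ∈ (G k).S → Df x = (cs k).1 * x - x * (cs k).1 := by
    intro k x hx
    rcases le_total (N x) k with h | h
    · exact (hstab (N x) k h x (hN x)).symm
    · exact hstab k (N x) h x hx
  refine ⟨{ toFun := Df, map_add' := ?_, map_smul' := ?_ }, ?_, ?_⟩
  · intro x y
    have hxk : x ∈ (G ((N x) ⊔ (N y))).S := hmono _ _ le_sup_left (hN x)
    have hyk : y ∈ (G ((N x) ⊔ (N y))).S := hmono _ _ le_sup_right (hN y)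
    rw [hDval _ _ (add_mem hxk hyk), hDval _ _ hxk, hDval _ _ hyk]
    rw [mul_add, add_mul]
    abel
  · intro m x
    show Df (m • x) = m • Df x
    rw [hDval (N x) _ (Submodule.smul_mem _ _ (hN x)), hDval (N x) x (hN x)]
    rw [mul_smul_comm, smul_mul_assoc, smul_sub]
  · intro x y
    show Df (x * y) = Df x * y + x * Df y
    have hxk : x ∈ (G ((N x) ⊔ (N y))).S := hmono _ _ le_sup_left (hN x)
    have hyk : y ∈ (G ((N x) ⊔ (N y))).S := hmono _ _ le_sup_right (hN y)
    have hxy : x * y ∈ (G ((N x) ⊔ (N y))).S := (G _).S_mul x hxk y hyk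
    rw [hDval _ _ hxy, hDval _ _ hxk, hDval _ _ hyk]
    set c := (cs ((N x) ⊔ (N y))).1
    simp only [sub_mul, mul_sub, mul_assoc]
    abel
  · intro x
    obtain ⟨k, hk⟩ := hex (x : A)
    have hxT : (x : A) ∈ (G k).T := (G k).mem_T_of hk (corner_idem he x.2)
    show Df (x : A) = (d₀ x : A)
    rw [hDval k _ hk, hCCT k _ hxT, Phi_corner he d₀ x]
end

section
/- Let F be a field and A an infinite-dimensional locally matrix algebra over F of countable dimension. Then dim_F Der(A) = |F|^{ℵ₀} and dim_F Outder(A) = |F|^{ℵ₀}, where |F|^{ℵ₀} denotes cardinal exponentiation of the cardinality of F by the countable cardinal ℵ₀. -/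
/-- The space `Der(A)` of derivations of `A`, as a submodule of the `F`-linear endomorphisms
of `A`. -/
def derSubmodule (F A : Type*) [Field F] [NonUnitalRing A] [Module F A]
    [SMulCommClass F A A] [IsScalarTower F A A] : Submodule F (Module.End F A) where
  carrier := {d | ∀ x y : A, d (x * y) = d x * y + x * d y}
  add_mem' := by
    intro d e hd he x y
    simp only [LinearMap.add_apply, hd x y, he x y, add_mul, mul_add]
    abel
  zero_mem' := by intro x y; simp
  smul_mem' := by
    intro c d hd x y
    simp only [LinearMap.smul_apply, hd x y, smul_add, smul_mul_assoc, mul_smul_comm]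

/-- The inner derivation `ad(b) : x ↦ b x - x b` as a linear endomorphism of `A`. -/
def adEnd (F A : Type*) [Field F] [NonUnitalRing A] [Module F A]
    [SMulCommClass F A A] [IsScalarTower F A A] (b : A) : Module.End F A :=
  LinearMap.mulLeft F b - LinearMap.mulRight F b

/-- The subspace `Inder(A)` of inner derivations inside `Der(A)`. -/
def innerSubmodule (F A : Type*) [Field F] [NonUnitalRing A] [Module F A]
    [SMulCommClass F A A] [IsScalarTower F A A] : Submodule F (derSubmodule F A) where
  carrier := {d | ∃ b : A, (d : Module.End F A) = adEnd F A b}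
  add_mem' := by
    rintro d e ⟨b, hb⟩ ⟨c, hc⟩
    refine ⟨b + c, ?_⟩
    ext x
    simp [hb, hc, adEnd, add_mul, mul_add]
    abel
  zero_mem' := ⟨0, by ext x; simp [adEnd]⟩
  smul_mem' := by
    rintro c d ⟨b, hb⟩
    refine ⟨c • b, ?_⟩
    have : ((c • d : derSubmodule F A) : Module.End F A) = c • (d : Module.End F A) := rfl
    ext x
    simp [this, LinearMap.smul_apply, hb, adEnd, smul_mul_assoc, mul_smul_comm, smul_sub]

/-- The quotient space `Outder(A) = Der(A)/Inder(A)` of outer derivations of `A`. -/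
abbrev outderSpace (F A : Type*) [Field F] [NonUnitalRing A] [Module F A]
    [SMulCommClass F A A] [IsScalarTower F A A] : Type _ :=
  derSubmodule F A ⧸ innerSubmodule F A

/-!
Write `A` as the union of a chain `B₀ ≤ B₁ ≤ ⋯` of matrix subalgebras together with elements
`Cₖ ∈ Bₖ₊₁` centralizing `Bₖ` that are not sums of central elements of `Bₖ` and `Bₖ₊₁`. Such
`Cₖ` exist because `A` is infinite-dimensional: if the identity of `Bₖ` is the identity of `A`,
the centralizer of `Bₖ` is not contained in `Bₖ` (decompose along matrix units); otherwise a
larger matrix subalgebra has a different identity `e'`, and unless `e'` is the identity of `A`,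
`e' - e` centralizes `Bₖ` and does the job.

For `ξ : ℕ → F`, the map `x ↦ [∑ ξₖ Cₖ, x]` is a well-defined derivation, since on `Bₖ` only
the first `k` terms contribute. If it equals `ad b`, then `b - ∑_{j<l} ξⱼ Cⱼ` is central in `Bₗ`
for all large `l`, which forces `ξ` to be finitely supported. So `Outder(A)` contains a copy of
`F^ℕ` modulo a subspace of countable dimension, which has dimension `|F|^ℵ₀`; conversely
`Der(A) ⊆ End(A)` embeds into `F^(ℕ × ℕ)` because `A` has countable dimension.
-/

open Cardinal

universe u v

section MatrixUnits

variable {R : Type*} [NonUnitalRing R] {ι : Type*} [Fintype ι] [DecidableEq ι] {E : ι → ι → R}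

/-- If `∑ i, E i i` acts as the identity on `a`, then `a = ∑ i j, matrixUnitCoeff E a i j * E i j`
with coefficients commuting with all `E p q`: the splitting `R ≅ Mₙ ⊗ C_R(Mₙ)`. -/
def matrixUnitCoeff (E : ι → ι → R) (a : R) (i j : ι) : R := ∑ k, E k i * a * E j k

theorem matrixUnit_mul_matrixUnitCoeff
    (hE : ∀ i j k l, E i j * E k l = if j = k then E i l else 0) (a : R) (i j p q : ι) :
    E p q * matrixUnitCoeff E a i j = E p i * a * E j q := by
  simp [matrixUnitCoeff, Finset.mul_sum, ← mul_assoc, hE]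

theorem matrixUnitCoeff_mul_matrixUnit
    (hE : ∀ i j k l, E i j * E k l = if j = k then E i l else 0) (a : R) (i j p q : ι) :
    matrixUnitCoeff E a i j * E p q = E p i * a * E j q := by
  simp [matrixUnitCoeff, Finset.sum_mul, mul_assoc, hE]

theorem sum_matrixUnitCoeff_mul_matrixUnit
    (hE : ∀ i j k l, E i j * E k l = if j = k then E i l else 0) (a : R) :
    ∑ i, ∑ j, matrixUnitCoeff E a i j * E i j = (∑ i, E i i) * a * ∑ j, E j j := by
  rw [Finset.sum_mul, Finset.sum_mul_sum]
  simp [matrixUnitCoeff_mul_matrixUnit hE]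

end MatrixUnits

section MatrixSubalgebra

variable {F A : Type*} [Field F] [NonUnitalRing A] [Module F A]
  {B B' : NonUnitalSubalgebra F A} {e e' : A}

def IsIdentityOf (B : NonUnitalSubalgebra F A) (e : A) : Prop :=
  e ∈ B ∧ ∀ x ∈ B, e * x = x ∧ x * e = x

theorem IsIdentityOf.eq (he : IsIdentityOf B e) (he' : IsIdentityOf B e') : e = e' :=
  (he'.2 e he.1).2.symm.trans (he.2 e' he'.1).1

theorem IsIdentityOf.mono (he : IsIdentityOf B' e) (hle : B ≤ B') (heB : e ∈ B) :
    IsIdentityOf B e :=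
  ⟨heB, fun x hx => he.2 x (hle hx)⟩

variable (F) in
def IsMatrixSubalgebra (B : NonUnitalSubalgebra F A) : Prop :=
  ∃ n : ℕ, ∃ f : B →ₙₐ[F] Matrix (Fin n) (Fin n) F, Function.Bijective f

theorem IsMatrixSubalgebra.fg (hB : IsMatrixSubalgebra F B) : B.toSubmodule.FG := by
  obtain ⟨n, f, hf⟩ := hB
  exact Module.Finite.iff_fg.mp (Module.Finite.equiv (LinearEquiv.ofBijective
    (f : B →ₗ[F] Matrix (Fin n) (Fin n) F) hf).symm)

section MatrixUnit

variable {n : ℕ} {f : B →ₙₐ[F] Matrix (Fin n) (Fin n) F}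

noncomputable def matrixUnit (hf : Function.Bijective f) (i j : Fin n) : B :=
  (RingEquiv.ofBijective f hf).symm (Matrix.single i j 1)

variable (hf : Function.Bijective f)

@[simp]
theorem apply_matrixUnit (i j : Fin n) : f (matrixUnit hf i j) = Matrix.single i j 1 :=
  (RingEquiv.ofBijective f hf).apply_symm_apply _

theorem matrixUnit_mul_matrixUnit (i j k l : Fin n) :
    (matrixUnit hf i j : A) * matrixUnit hf k l =
      if j = k then (matrixUnit hf i l : A) else 0 := by
  have : matrixUnit hf i j * matrixUnit hf k l = if j = k then matrixUnit hf i l else 0 := by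
    apply hf.1
    split_ifs with h <;> simp [h]
  rw [← NonUnitalSubalgebra.coe_mul, this]
  split_ifs <;> rfl

theorem eq_sum_smul_matrixUnit (x : B) : x = ∑ i, ∑ j, f x i j • matrixUnit hf i j :=
  hf.1 (by simpa using Matrix.matrix_eq_sum_single (f x))

theorem apply_sum_matrixUnit : f (∑ i, matrixUnit hf i i) = 1 := by
  simp [Matrix.sum_single_one]

theorem isIdentityOf_sum_matrixUnit : IsIdentityOf B (∑ i, matrixUnit hf i i : B) := by
  refine ⟨SetLike.coe_mem _, fun x hx => ⟨?_, ?_⟩⟩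
  · exact congrArg Subtype.val (hf.1 (a₁ := (∑ i, matrixUnit hf i i) * ⟨x, hx⟩)
      (a₂ := ⟨x, hx⟩) (by rw [map_mul, apply_sum_matrixUnit, one_mul]))
  · exact congrArg Subtype.val (hf.1 (a₁ := ⟨x, hx⟩ * ∑ i, matrixUnit hf i i)
      (a₂ := ⟨x, hx⟩) (by rw [map_mul, apply_sum_matrixUnit, mul_one]))

end MatrixUnit

theorem IsMatrixSubalgebra.exists_isIdentityOf (hB : IsMatrixSubalgebra F B) :
    ∃ e, IsIdentityOf B e :=
  let ⟨_, _, hf⟩ := hB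
  ⟨_, isIdentityOf_sum_matrixUnit hf⟩

variable [SMulCommClass F A A]

theorem IsIdentityOf.sub_notMem_span_sup {B₁ B₂ : NonUnitalSubalgebra F A} {e₁ e₂ : A}
    (he : IsIdentityOf B e) (he₁ : IsIdentityOf B₁ e₁) (he₂ : IsIdentityOf B₂ e₂) (h₁ : B ≤ B₁)
    (h₂ : B₁ ≤ B₂) (hne₁ : e₁ ≠ e) (hne₂ : e₂ ≠ e₁) :
    e₁ - e ∉ F ∙ e ⊔ F ∙ e₂ := by
  intro hmem
  obtain ⟨_, hα, _, hβ, hsum⟩ := Submodule.mem_sup.mp hmem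
  obtain ⟨α, rfl⟩ := Submodule.mem_span_singleton.mp hα
  obtain ⟨β, rfl⟩ := Submodule.mem_span_singleton.mp hβ
  have hsum₁ : α • e + β • e₁ = e₁ - e := by
    have := congrArg (e₁ * ·) hsum
    simpa only [mul_add, mul_sub, mul_smul_comm, (he₁.2 e (h₁ he.1)).1, (he₁.2 e₁ he₁.1).1,
      (he₂.2 e₁ (h₂ he₁.1)).2] using this
  have hβ : β = 0 := by
    refine (smul_eq_zero.mp ?_).resolve_right (sub_ne_zero.mpr hne₂)
    calc β • (e₂ - e₁) = (α • e + β • e₂) - (α • e + β • e₁) := by rw [smul_sub]; abel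
      _ = 0 := by rw [hsum, hsum₁, sub_self]
  have he₁B : e₁ ∈ B := by
    rw [hβ, zero_smul, add_zero] at hsum
    rw [show e₁ = (1 + α) • e by rw [add_smul, one_smul, hsum]; abel]
    exact SMulMemClass.smul_mem _ he.1
  exact hne₁ ((he₁.mono h₁ he₁B).eq he)

variable [IsScalarTower F A A]

theorem IsIdentityOf.sub_mem_centralizer (he : IsIdentityOf B e) (he' : IsIdentityOf B' e')
    (hle : B ≤ B') : e' - e ∈ NonUnitalSubalgebra.centralizer F (B : Set A) := by
  intro x hx
  rw [mul_sub, sub_mul, (he.2 x hx).1, (he.2 x hx).2, (he'.2 x (hle hx)).1,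
    (he'.2 x (hle hx)).2]

def centerOf (B : NonUnitalSubalgebra F A) : Submodule F A :=
  B.toSubmodule ⊓ (NonUnitalSubalgebra.centralizer F (B : Set A)).toSubmodule

theorem centerOf_le : centerOf B ≤ B.toSubmodule := inf_le_left

theorem mem_centralizer_of_commute_matrixUnit {n : ℕ} {f : B →ₙₐ[F] Matrix (Fin n) (Fin n) F}
    (hf : Function.Bijective f) {c : A}
    (hc : ∀ i j, (matrixUnit hf i j : A) * c = c * matrixUnit hf i j) :
    c ∈ NonUnitalSubalgebra.centralizer F (B : Set A) := by
  intro x hx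
  rw [show x = ((⟨x, hx⟩ : B) : A) from rfl, eq_sum_smul_matrixUnit hf ⟨x, hx⟩]
  simp [Finset.sum_mul, Finset.mul_sum, smul_mul_assoc, mul_smul_comm, hc]

namespace IsMatrixSubalgebra

theorem centerOf_le_span (hB : IsMatrixSubalgebra F B) (he : IsIdentityOf B e) :
    centerOf B ≤ F ∙ e := by
  obtain ⟨n, f, hf⟩ := hB
  rintro z ⟨hzB, hz⟩
  obtain ⟨r, hr⟩ := (Matrix.mem_range_scalar_iff_commute_single' (M := f ⟨z, hzB⟩)).mpr
    fun i j => by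
      rw [← apply_matrixUnit hf i j, Commute, SemiconjBy, ← map_mul, ← map_mul]
      exact congrArg f (Subtype.ext (hz _ (matrixUnit hf i j).2))
  have hz : (⟨z, hzB⟩ : B) = r • ∑ i, matrixUnit hf i i :=
    hf.1 (by rw [map_smul, apply_sum_matrixUnit, ← hr, Matrix.scalar_apply,
      Matrix.smul_one_eq_diagonal])
  rw [← (isIdentityOf_sum_matrixUnit hf).eq he]
  exact Submodule.mem_span_singleton.mpr ⟨r, (congrArg Subtype.val hz).symm⟩

theorem exists_mem_centralizer_notMem (hB : IsMatrixSubalgebra F B)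
    (he : IsIdentityOf (⊤ : NonUnitalSubalgebra F A) e) (heB : e ∈ B) {a : A} (ha : a ∉ B) :
    ∃ c ∈ NonUnitalSubalgebra.centralizer F (B : Set A), c ∉ B := by
  obtain ⟨n, f, hf⟩ := hB
  set E : Fin n → Fin n → A := fun i j => matrixUnit hf i j
  have hE := matrixUnit_mul_matrixUnit hf
  have hsum : ∑ i, E i i = e := by
    simpa [E] using (isIdentityOf_sum_matrixUnit hf).eq (he.mono le_top heB)
  by_contra! h
  refine ha ?_
  have hae : a = e * a * e := by rw [(he.2 a trivial).1, (he.2 a trivial).2]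
  rw [hae, ← hsum, ← sum_matrixUnitCoeff_mul_matrixUnit hE]
  refine sum_mem fun i _ => sum_mem fun j _ => mul_mem (h _ ?_) (matrixUnit hf i j).2
  exact mem_centralizer_of_commute_matrixUnit hf fun p q => by
    rw [matrixUnit_mul_matrixUnitCoeff hE, matrixUnitCoeff_mul_matrixUnit hE]

end IsMatrixSubalgebra

end MatrixSubalgebra

namespace IsLocallyMatrix

variable {F A : Type*} [Field F] [NonUnitalRing A] [Module F A] [SMulCommClass F A A]
  [IsScalarTower F A A] {B : NonUnitalSubalgebra F A} {e : A}

theorem exists_le_isMatrixSubalgebra (hA : IsLocallyMatrix F A) (hB : B.toSubmodule.FG)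
    (s : Finset A) :
    ∃ B', IsMatrixSubalgebra F B' ∧ B ≤ B' ∧ ↑s ⊆ (B' : Set A) := by
  classical
  obtain ⟨t, ht⟩ := hB
  obtain ⟨B', n, -, hts, f, hf⟩ := hA (t ∪ s)
  have hle : B.toSubmodule ≤ B'.toSubmodule :=
    ht ▸ Submodule.span_le.mpr fun y hy => hts (by simp [hy])
  exact ⟨B', ⟨n, f, hf⟩, fun x hx => hle hx, fun x hx => hts (by simp [hx])⟩

theorem exists_isIdentityOf_ne (hA : IsLocallyMatrix F A) (hB : IsMatrixSubalgebra F B)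
    (he : IsIdentityOf B e) (hglob : ¬ IsIdentityOf (⊤ : NonUnitalSubalgebra F A) e)
    (s : Finset A) :
    ∃ B' e', IsMatrixSubalgebra F B' ∧ B ≤ B' ∧ ↑s ⊆ (B' : Set A) ∧ IsIdentityOf B' e' ∧
      e' ≠ e := by
  classical
  obtain ⟨a, ha⟩ : ∃ a, ¬ (e * a = a ∧ a * e = a) := by
    by_contra! h
    exact hglob ⟨trivial, fun x _ => h x⟩
  obtain ⟨B', hB', hle, hs⟩ := hA.exists_le_isMatrixSubalgebra hB.fg (insert a s)
  obtain ⟨e', he'⟩ := hB'.exists_isIdentityOf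
  refine ⟨B', e', hB', hle, fun x hx => hs (by simp [hx]), he', ?_⟩
  rintro rfl
  exact ha (he'.2 a (hs (by simp)))

theorem exists_mem_centralizer_notMem (hA : IsLocallyMatrix F A) (hinf : ¬ Module.Finite F A)
    (hB : IsMatrixSubalgebra F B) (he : IsIdentityOf (⊤ : NonUnitalSubalgebra F A) e)
    (heB : e ∈ B) (s : Finset A) :
    ∃ B', IsMatrixSubalgebra F B' ∧ B ≤ B' ∧ ↑s ⊆ (B' : Set A) ∧ IsIdentityOf B' e ∧
      ∃ c ∈ B', c ∈ NonUnitalSubalgebra.centralizer F (B : Set A) ∧ c ∉ B := by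
  classical
  obtain ⟨a, ha⟩ : ∃ a, a ∉ B := by
    by_contra! h
    exact hinf (Module.finite_def.mpr
      ((Submodule.eq_top_iff' (p := B.toSubmodule)).mpr h ▸ hB.fg))
  obtain ⟨c, hc, hcB⟩ := hB.exists_mem_centralizer_notMem he heB ha
  obtain ⟨B', hB', hle, hs⟩ := hA.exists_le_isMatrixSubalgebra hB.fg (insert c s)
  exact ⟨B', hB', hle, fun x hx => hs (by simp [hx]), he.mono le_top (hle heB), c,
    hs (by simp), hc, hcB⟩

theorem exists_le_mem_centralizer_notMem_sup (hA : IsLocallyMatrix F A)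
    (hinf : ¬ Module.Finite F A) (hB : IsMatrixSubalgebra F B) (s : Finset A) :
    ∃ B', IsMatrixSubalgebra F B' ∧ B ≤ B' ∧ ↑s ⊆ (B' : Set A) ∧
      ∃ c ∈ B', c ∈ NonUnitalSubalgebra.centralizer F (B : Set A) ∧
        c ∉ centerOf B ⊔ centerOf B' := by
  obtain ⟨e, he⟩ := hB.exists_isIdentityOf
  by_cases hglob : IsIdentityOf (⊤ : NonUnitalSubalgebra F A) e
  · obtain ⟨B', hB', hle, hs, he', c, hcB', hc, hcB⟩ :=
      hA.exists_mem_centralizer_notMem hinf hB hglob he.1 s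
    refine ⟨B', hB', hle, hs, c, hcB', hc, fun hmem => hcB ?_⟩
    exact sup_le centerOf_le ((hB'.centerOf_le_span he').trans
      ((Submodule.span_singleton_le_iff_mem e B.toSubmodule).mpr he.1)) hmem
  obtain ⟨B₁, e₁, hB₁, hle₁, hs₁, he₁, hne₁⟩ := hA.exists_isIdentityOf_ne hB he hglob s
  by_cases hglob₁ : IsIdentityOf (⊤ : NonUnitalSubalgebra F A) e₁
  · obtain ⟨B₂, hB₂, hle₂, -, he₂, c, hcB₂, hc, hcB₁⟩ :=
      hA.exists_mem_centralizer_notMem hinf hB₁ hglob₁ he₁.1 ∅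
    refine ⟨B₂, hB₂, hle₁.trans hle₂, fun x hx => hle₂ (hs₁ hx), c, hcB₂,
      NonUnitalSubalgebra.centralizer_le F _ _ hle₁ hc, fun hmem => hcB₁ ?_⟩
    exact sup_le (centerOf_le.trans hle₁) ((hB₂.centerOf_le_span he₂).trans
      ((Submodule.span_singleton_le_iff_mem e₁ B₁.toSubmodule).mpr he₁.1)) hmem
  · obtain ⟨B₂, e₂, hB₂, hle₂, -, he₂, hne₂⟩ := hA.exists_isIdentityOf_ne hB₁ he₁ hglob₁ ∅
    refine ⟨B₂, hB₂, hle₁.trans hle₂, fun x hx => hle₂ (hs₁ hx), e₁ - e,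
      sub_mem (hle₂ he₁.1) (hle₂ (hle₁ he.1)), he.sub_mem_centralizer he₁ hle₁,
      fun hmem => he.sub_notMem_span_sup he₁ he₂ hle₁ hle₂ hne₁ hne₂ ?_⟩
    exact sup_le_sup (hB.centerOf_le_span he) (hB₂.centerOf_le_span he₂) hmem

end IsLocallyMatrix

section Rank

variable {F : Type u} [Field F]

theorem rank_fun_eq_power_aleph0 (ι : Type) [Countable ι] [Infinite ι] :
    Module.rank F (ι → F) = #F ^ ℵ₀ := by
  rw [rank_fun_infinite, mk_arrow, lift_uzero, mk_eq_aleph0 ι, lift_aleph0]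

theorem aleph0_lt_power_aleph0 : ℵ₀ < #F ^ ℵ₀ :=
  (cantor ℵ₀).trans_le (power_le_power_right (two_le_iff.mpr (exists_pair_ne F)))

theorem lift_power_aleph0_le_rank {V : Type v} [AddCommGroup V] [Module F V]
    (ψ : (ℕ → F) →ₗ[F] V) (hψ : ∀ ξ ∈ LinearMap.ker ψ, (Function.support ξ).Finite) :
    lift.{v} (#F ^ ℵ₀) ≤ lift.{u} (Module.rank F V) := by
  have hker : Module.rank F (LinearMap.ker ψ) ≤ ℵ₀ := by
    have hle : LinearMap.ker ψ ≤ LinearMap.range (Finsupp.lcoeFun : (ℕ →₀ F) →ₗ[F] ℕ → F) :=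
      fun ξ hξ => ⟨Finsupp.ofSupportFinite ξ (hψ ξ hξ), rfl⟩
    refine (Submodule.rank_mono hle).trans ((rank_range_le _).trans ?_)
    simp
  have hlt : ℵ₀ < lift.{v} (#F ^ ℵ₀) := aleph0_lt_lift.mpr aleph0_lt_power_aleph0
  have hrange : lift.{u} (Module.rank F (LinearMap.range ψ)) = lift.{v} (#F ^ ℵ₀) := by
    refine eq_of_add_eq_of_aleph0_le ?_ ((lift_le_aleph0.mpr hker).trans_lt hlt) hlt.le
    rw [add_comm, ψ.lift_rank_range_add_rank_ker, rank_fun_eq_power_aleph0]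
  rw [← hrange]
  exact lift_le.mpr (Submodule.rank_le _)

variable {M : Type v} [AddCommGroup M] [Module F M]

theorem countable_ofVectorSpaceIndex (h : Module.rank F M ≤ ℵ₀) :
    Countable (Module.Basis.ofVectorSpaceIndex F M) :=
  mk_le_aleph0_iff.mp ((Module.Basis.ofVectorSpace F M).mk_eq_rank''.trans_le h)

theorem exists_span_range_nat_eq_top (h : Module.rank F M ≤ ℵ₀) :
    ∃ a : ℕ → M, Submodule.span F (Set.range a) = ⊤ := by
  have := countable_ofVectorSpaceIndex h
  let b := Module.Basis.ofVectorSpace F M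
  obtain ⟨a, ha⟩ := Set.countable_iff_exists_subset_range.mp (Set.countable_range b)
  exact ⟨a, eq_top_mono (Submodule.span_mono ha) b.span_eq⟩

theorem exists_injective_linearMap_nat_fun (h : Module.rank F M ≤ ℵ₀) :
    ∃ φ : M →ₗ[F] (ℕ → F), Function.Injective φ := by
  have := countable_ofVectorSpaceIndex h
  let b := Module.Basis.ofVectorSpace F M
  obtain ⟨j, hj⟩ := exists_injective_nat (Module.Basis.ofVectorSpaceIndex F M)
  exact ⟨Finsupp.lcoeFun ∘ₗ Finsupp.lmapDomain F F j ∘ₗ b.repr.toLinearMap,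
    DFunLike.coe_injective.comp ((Finsupp.mapDomain_injective hj).comp b.repr.injective)⟩

theorem lift_rank_end_le (h : Module.rank F M ≤ ℵ₀) :
    lift.{u} (Module.rank F (Module.End F M)) ≤ lift.{v} (#F ^ ℵ₀) := by
  obtain ⟨a, ha⟩ := exists_span_range_nat_eq_top h
  obtain ⟨φ, hφ⟩ := exists_injective_linearMap_nat_fun h
  let χ : Module.End F M →ₗ[F] (ℕ × ℕ → F) :=
    { toFun := fun f p => φ (f (a p.1)) p.2
      map_add' := fun f g => by ext; simp
      map_smul' := fun r f => by ext; simp }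
  have hχ : Function.Injective χ := fun f g hfg =>
    LinearMap.ext_on_range ha fun n => hφ (funext fun m => congrFun hfg (n, m))
  simpa [rank_fun_eq_power_aleph0] using χ.lift_rank_le_of_injective hχ

end Rank

section Derivations

variable {F A : Type*} [Field F] [NonUnitalRing A] [Module F A] [SMulCommClass F A A]
  [IsScalarTower F A A]

theorem adEnd_apply (b x : A) : adEnd F A b x = b * x - x * b := rfl

theorem adEnd_mul (b x y : A) : adEnd F A b (x * y) = adEnd F A b x * y + x * adEnd F A b y := by
  simp only [adEnd_apply, sub_mul, mul_sub, mul_assoc]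
  abel

end Derivations

structure OuterChain (F A : Type*) [Field F] [NonUnitalRing A] [Module F A]
    [SMulCommClass F A A] [IsScalarTower F A A] where
  B : ℕ → NonUnitalSubalgebra F A
  C : ℕ → A
  mono : Monotone B
  exists_mem : ∀ x, ∃ k, x ∈ B k
  C_mem : ∀ k, C k ∈ B (k + 1)
  C_mem_centralizer : ∀ k, C k ∈ NonUnitalSubalgebra.centralizer F (B k : Set A)
  C_notMem : ∀ k, C k ∉ centerOf (B k) ⊔ centerOf (B (k + 1))

namespace OuterChain

variable {F : Type u} {A : Type v} [Field F] [NonUnitalRing A] [Module F A]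
  [SMulCommClass F A A] [IsScalarTower F A A]

section

variable (S : OuterChain F A)

def partialSum (ξ : ℕ → F) (k : ℕ) : A := ∑ j ∈ Finset.range k, ξ j • S.C j

theorem partialSum_mem (ξ : ℕ → F) (k : ℕ) : S.partialSum ξ k ∈ S.B k :=
  sum_mem fun j hj => SMulMemClass.smul_mem _ (S.mono (Finset.mem_range.mp hj) (S.C_mem j))

theorem adEnd_partialSum_of_le (ξ : ℕ → F) {k l : ℕ} (hkl : k ≤ l) {x : A} (hx : x ∈ S.B k) :
    adEnd F A (S.partialSum ξ l) x = adEnd F A (S.partialSum ξ k) x := by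
  induction l, hkl using Nat.le_induction with
  | base => rfl
  | succ l hkl ih =>
    have hxC : x * S.C l = S.C l * x := S.C_mem_centralizer l x (S.mono hkl hx)
    rw [← ih, partialSum, Finset.sum_range_succ, ← partialSum]
    simp only [adEnd_apply, add_mul, mul_add, smul_mul_assoc, mul_smul_comm, hxC]
    abel

noncomputable def level (x : A) : ℕ := (S.exists_mem x).choose

theorem mem_level (x : A) : x ∈ S.B (S.level x) := (S.exists_mem x).choose_spec

theorem adEnd_partialSum_level (ξ : ℕ → F) {k : ℕ} {x : A} (hx : x ∈ S.B k) :
    adEnd F A (S.partialSum ξ (S.level x)) x = adEnd F A (S.partialSum ξ k) x := by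
  rcases le_total (S.level x) k with h | h
  · exact (S.adEnd_partialSum_of_le ξ h (S.mem_level x)).symm
  · exact S.adEnd_partialSum_of_le ξ h hx

theorem exists_mem₂ (x y : A) : ∃ k, x ∈ S.B k ∧ y ∈ S.B k :=
  ⟨max (S.level x) (S.level y), S.mono (le_max_left _ _) (S.mem_level x),
    S.mono (le_max_right _ _) (S.mem_level y)⟩

noncomputable def derivation : (ℕ → F) →ₗ[F] Module.End F A :=
  LinearMap.mk₂ F (fun ξ x => adEnd F A (S.partialSum ξ (S.level x)) x)
    (fun ξ η x => by
      simp only [adEnd_apply, partialSum, Pi.add_apply, add_smul, Finset.sum_add_distrib,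
        add_mul, mul_add]
      abel)
    (fun r ξ x => by
      simp only [adEnd_apply, partialSum, Pi.smul_apply, smul_eq_mul, mul_smul,
        ← Finset.smul_sum, smul_mul_assoc, mul_smul_comm, smul_sub])
    (fun ξ x y => by
      obtain ⟨k, hx, hy⟩ := S.exists_mem₂ x y
      rw [S.adEnd_partialSum_level ξ hx, S.adEnd_partialSum_level ξ hy,
        S.adEnd_partialSum_level ξ (add_mem hx hy), map_add])
    (fun r ξ x => by
      rw [S.adEnd_partialSum_level ξ (S.mem_level x),
        S.adEnd_partialSum_level ξ (SMulMemClass.smul_mem r (S.mem_level x)), map_smul])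

theorem derivation_apply_of_mem (ξ : ℕ → F) {k : ℕ} {x : A} (hx : x ∈ S.B k) :
    S.derivation ξ x = adEnd F A (S.partialSum ξ k) x := by
  simp only [derivation, LinearMap.mk₂_apply]
  exact S.adEnd_partialSum_level ξ hx

theorem derivation_mem_derSubmodule (ξ : ℕ → F) : S.derivation ξ ∈ derSubmodule F A := by
  intro x y
  obtain ⟨k, hx, hy⟩ := S.exists_mem₂ x y
  rw [S.derivation_apply_of_mem ξ hx, S.derivation_apply_of_mem ξ hy,
    S.derivation_apply_of_mem ξ (mul_mem hx hy), adEnd_mul]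

noncomputable def toDer : (ℕ → F) →ₗ[F] derSubmodule F A :=
  LinearMap.codRestrict _ S.derivation S.derivation_mem_derSubmodule

theorem finite_support_of_toDer_mem (ξ : ℕ → F) (h : S.toDer ξ ∈ innerSubmodule F A) :
    (Function.support ξ).Finite := by
  obtain ⟨b, hb⟩ := h
  obtain ⟨m, hbm⟩ := S.exists_mem b
  have hcenter : ∀ l, m ≤ l → b - S.partialSum ξ l ∈ centerOf (S.B l) := by
    intro l hl
    refine ⟨sub_mem (S.mono hl hbm) (S.partialSum_mem ξ l), fun x hx => ?_⟩
    have hbx : adEnd F A (S.partialSum ξ l) x = adEnd F A b x := by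
      rw [← S.derivation_apply_of_mem ξ hx, ← hb]
      rfl
    rw [adEnd_apply, adEnd_apply] at hbx
    rw [← sub_eq_zero, ← sub_eq_zero.mpr hbx]
    noncomm_ring
  refine (Finset.range m).finite_toSet.subset fun k hk => ?_
  by_contra hkm
  have hmk : m ≤ k := by simpa using hkm
  apply S.C_notMem k
  rw [← Submodule.smul_mem_iff _ hk]
  have hdiff : ξ k • S.C k = (b - S.partialSum ξ k) - (b - S.partialSum ξ (k + 1)) := by
    rw [partialSum, partialSum, Finset.sum_range_succ]
    abel
  rw [hdiff]
  exact sub_mem (Submodule.mem_sup_left (hcenter k hmk))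
    (Submodule.mem_sup_right (hcenter (k + 1) (hmk.trans k.le_succ)))

end

theorem lift_power_aleph0_le_rank_outderSpace (S : OuterChain F A) :
    lift.{v} (#F ^ ℵ₀) ≤ lift.{u} (Module.rank F (outderSpace F A)) :=
  lift_power_aleph0_le_rank ((innerSubmodule F A).mkQ ∘ₗ S.toDer) fun ξ hξ =>
    S.finite_support_of_toDer_mem ξ ((Submodule.Quotient.mk_eq_zero _).mp hξ)

end OuterChain

theorem IsLocallyMatrix.nonempty_outerChain {F A : Type*} [Field F] [NonUnitalRing A]
    [Module F A] [SMulCommClass F A A] [IsScalarTower F A A] (hA : IsLocallyMatrix F A)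
    (hinf : ¬ Module.Finite F A) (hcnt : Module.rank F A ≤ ℵ₀) : Nonempty (OuterChain F A) := by
  obtain ⟨a, ha⟩ := exists_span_range_nat_eq_top hcnt
  have step : ∀ (B : {B : NonUnitalSubalgebra F A // IsMatrixSubalgebra F B}) (k : ℕ),
      ∃ B' : {B : NonUnitalSubalgebra F A // IsMatrixSubalgebra F B}, B.1 ≤ B'.1 ∧ a k ∈ B'.1 ∧
        ∃ c ∈ B'.1, c ∈ NonUnitalSubalgebra.centralizer F (B.1 : Set A) ∧
          c ∉ centerOf B.1 ⊔ centerOf B'.1 := by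
    intro B k
    obtain ⟨B', hB', hle, hs, hc⟩ := hA.exists_le_mem_centralizer_notMem_sup hinf B.2 {a k}
    exact ⟨⟨B', hB'⟩, hle, hs (by simp), hc⟩
  choose next hle hmem C hC hcent hnotMem using step
  obtain ⟨B₀, n, -, -, f, hf⟩ := hA ∅
  let B : ℕ → {B : NonUnitalSubalgebra F A // IsMatrixSubalgebra F B} :=
    fun k => Nat.rec ⟨B₀, n, f, hf⟩ (fun k Bk => next Bk k) k
  have hmono : Monotone fun k => (B k).1.toSubmodule :=
    monotone_nat_of_le_succ fun k => hle (B k) k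
  have hsup : ⨆ k, (B k).1.toSubmodule = ⊤ :=
    eq_top_iff.mpr (ha ▸ Submodule.span_le.mpr (Set.range_subset_iff.mpr fun k =>
      Submodule.mem_iSup_of_mem (k + 1) (hmem (B k) k)))
  exact ⟨{ B := fun k => (B k).1
           C := fun k => C (B k) k
           mono := fun _ _ h => hmono h
           exists_mem := fun x =>
             (Submodule.mem_iSup_of_directed _ hmono.directed_le).mp (hsup ▸ trivial)
           C_mem := fun k => hC (B k) k
           C_mem_centralizer := fun k => hcent (B k) k
           C_notMem := fun k => hnotMem (B k) k }⟩

/-- **Theorem 7**: for an infinite-dimensional locally matrix algebra `A` of countable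
dimension over a field `F`, `dim_F Der(A) = dim_F Outder(A) = |F| ^ ℵ₀`
(cardinal exponentiation). -/
theorem rank_der_and_outder_of_locallyMatrix (F : Type u) (A : Type v) [Field F]
    [NonUnitalRing A] [Module F A] [SMulCommClass F A A] [IsScalarTower F A A]
    (hA : IsLocallyMatrix F A) (hinf : ¬ Module.Finite F A)
    (hcnt : Module.rank F A ≤ Cardinal.aleph0) :
    Cardinal.lift.{u} (Module.rank F (derSubmodule F A)) =
      Cardinal.lift.{v} (Cardinal.mk F) ^ (Cardinal.aleph0 : Cardinal.{max u v}) ∧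
    Cardinal.lift.{u} (Module.rank F (outderSpace F A)) =
      Cardinal.lift.{v} (Cardinal.mk F) ^ (Cardinal.aleph0 : Cardinal.{max u v}) := by
  obtain ⟨S⟩ := hA.nonempty_outerChain hinf hcnt
  have hupper : lift.{u} (Module.rank F (derSubmodule F A)) ≤ lift.{v} (#F ^ ℵ₀) :=
    (lift_le.mpr (Submodule.rank_le _)).trans (lift_rank_end_le hcnt)
  have hlower := S.lift_power_aleph0_le_rank_outderSpace
  have hquot : lift.{u} (Module.rank F (outderSpace F A)) ≤
      lift.{u} (Module.rank F (derSubmodule F A)) :=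
    lift_le.mpr (rank_quotient_le _)
  have hpow : lift.{v} (#F ^ ℵ₀) = lift.{v} #F ^ ℵ₀ := by rw [lift_power, lift_aleph0]
  rw [← hpow]
  exact ⟨hupper.antisymm (hlower.trans hquot), (hquot.trans hupper).antisymm hlower⟩
end
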